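/- arXiv:1811.10295 — 12 statements merged into one kernel-verified Lean document; each statement's English description precedes it below -/
import Mathlib

section
/- Let G be a gapset of multiplicity m, and for i ≥ 0 define G_i = G ∩ [im+1, (i+1)m−1]. Then G_{i+1} ⊆ m + G_i for all i ≥ 0. -/
/-- A gapset: a finite set of positive integers such that whenever `z ∈ G`
decomposes as `z = x + y` with `x, y` positive, then `x ∈ G` or `y ∈ G`. -/
def IsGapset (G : Finset ℕ) : Prop :=
  (∀ g ∈ G, 0 < g) ∧
    ∀ z ∈ G, ∀ x y : ℕ, 0 < x → 0 < y → z = x + y → x ∈ G ∨ y ∈ G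

/-- The multiplicity: the smallest positive integer not in `G`. -/
noncomputable def gmult (G : Finset ℕ) : ℕ := sInf {m : ℕ | 0 < m ∧ m ∉ G}

/-- The conductor: `max G + 1` (and `0` if `G` is empty). -/
noncomputable def gcond (G : Finset ℕ) : ℕ := if h : G.Nonempty then G.max' h + 1 else 0

/-- The depth: `⌈conductor / multiplicity⌉`. -/
noncomputable def gdepth (G : Finset ℕ) : ℕ := (gcond G + gmult G - 1) / gmult G

theorem stmt4 (G : Finset ℕ) (hG : IsGapset G) (i : ℕ) :
    ∀ x ∈ G ∩ Finset.Icc ((i + 1) * gmult G + 1) ((i + 2) * gmult G - 1),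
      ∃ y ∈ G ∩ Finset.Icc (i * gmult G + 1) ((i + 1) * gmult G - 1),
        x = gmult G + y := by
  have hne : {m : ℕ | 0 < m ∧ m ∉ G}.Nonempty := by
    refine ⟨G.sup id + 1, Nat.succ_pos _, fun h => ?_⟩
    have := Finset.le_sup (f := id) h
    simp only [id] at this
    omega
  have hm := Nat.sInf_mem hne
  rw [show sInf {m : ℕ | 0 < m ∧ m ∉ G} = gmult G from rfl] at hm
  obtain ⟨hmpos, hmG⟩ := hm
  set m := gmult G with hmdef
  intro x hx
  simp only [Finset.mem_inter, Finset.mem_Icc] at hx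
  obtain ⟨hxG, h1, h2⟩ := hx
  have e1 : (i + 1) * m = i * m + m := by ring
  have e2 : (i + 2) * m = i * m + m + m := by ring
  have hsplit : x = m + (x - m) := by omega
  have hyG : (x - m) ∈ G := by
    rcases hG.2 x hxG m (x - m) hmpos (by omega) hsplit with h | h
    · exact absurd h hmG
    · exact h
  refine ⟨x - m, ?_, hsplit⟩
  simp only [Finset.mem_inter, Finset.mem_Icc]
  exact ⟨hyG, by omega, by omega⟩
end

section
/- Let G be a gapset with multiplicity m and conductor c. If a ≥ c + m, then G ∪ {a} is not a gapset. Consequently, every child H = G ⊔ {a} of G in the semigroup tree (with a > max G) satisfies c ≤ a ≤ m + c − 1. -/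
theorem stmt6 (G : Finset ℕ) (hG : IsGapset G) (hne : G.Nonempty) :
    (∀ a : ℕ, gcond G + gmult G ≤ a → ¬ IsGapset (insert a G)) ∧
    (∀ a : ℕ, (∀ g ∈ G, g < a) → IsGapset (insert a G) →
      gcond G ≤ a ∧ a ≤ gmult G + gcond G - 1) := by
  have hc : gcond G = G.max' hne + 1 := by simp [gcond, hne]
  have hcne : (G.max' hne + 1) ∉ G := fun h =>
    absurd (G.le_max' _ h) (by omega)
  have hSne : ({m : ℕ | 0 < m ∧ m ∉ G} : Set ℕ).Nonempty :=
    ⟨G.max' hne + 1, Nat.succ_pos _, hcne⟩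
  have hmem := Nat.sInf_mem hSne
  have hmpos : 0 < gmult G := hmem.1
  have hmnot : gmult G ∉ G := hmem.2
  have hmle : gmult G ≤ gcond G := by
    rw [hc]; exact Nat.sInf_le ⟨Nat.succ_pos _, hcne⟩
  have hcpos : 0 < gcond G := by omega
  have key : ∀ a : ℕ, gcond G + gmult G ≤ a → ¬ IsGapset (insert a G) := by
    intro a ha ⟨_, h2⟩
    have h1 : a - gmult G ∉ G := fun h =>
      absurd (G.le_max' _ h) (by omega)
    have := h2 a (Finset.mem_insert_self a G) (gmult G) (a - gmult G)
      hmpos (by omega) (by omega)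
    rcases this with h | h
    · rcases Finset.mem_insert.mp h with h | h
      · omega
      · exact hmnot h
    · rcases Finset.mem_insert.mp h with h | h
      · omega
      · exact h1 h
  refine ⟨key, fun a hlt hgap => ⟨?_, ?_⟩⟩
  · have := hlt _ (G.max'_mem hne); omega
  · by_contra h
    exact key a (by omega) hgap
end

section
/- Let m ≥ 1 and let F_0 = [1, m−1] ⊇ F_1 be any m-filtration of length 2. Then the set G = F_0 ∪ (m + F_1) is a gapset of multiplicity m and depth at most 2. Conversely, every gapset of depth at most 2 has this form. -/
lemma gmult_eq {G : Finset ℕ} {m : ℕ} (h1 : 0 < m) (h2 : m ∉ G)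
    (h3 : ∀ k, 0 < k → k < m → k ∈ G) : gmult G = m := by
  have hmem : m ∈ {k : ℕ | 0 < k ∧ k ∉ G} := ⟨h1, h2⟩
  have hle : sInf {k : ℕ | 0 < k ∧ k ∉ G} ≤ m := Nat.sInf_le hmem
  have hin := Nat.sInf_mem ⟨m, hmem⟩
  rcases hin with ⟨hpos, hnotin⟩
  have : ¬ sInf {k : ℕ | 0 < k ∧ k ∉ G} < m := fun hlt => hnotin (h3 _ hpos hlt)
  unfold gmult
  omega

theorem stmt7 (m : ℕ) (hm : 1 ≤ m) :
    (∀ F1 : Finset ℕ, F1 ⊆ Finset.Icc 1 (m - 1) →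
      IsGapset (Finset.Icc 1 (m - 1) ∪ F1.image (fun x => m + x)) ∧
      gmult (Finset.Icc 1 (m - 1) ∪ F1.image (fun x => m + x)) = m ∧
      gdepth (Finset.Icc 1 (m - 1) ∪ F1.image (fun x => m + x)) ≤ 2) ∧
    (∀ G : Finset ℕ, IsGapset G → gdepth G ≤ 2 →
      ∃ (m' : ℕ) (F1 : Finset ℕ), 1 ≤ m' ∧ F1 ⊆ Finset.Icc 1 (m' - 1) ∧
        G = Finset.Icc 1 (m' - 1) ∪ F1.image (fun x => m' + x)) := by
  constructor
  · intro F1 hF1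
    set G := Finset.Icc 1 (m - 1) ∪ F1.image (fun x => m + x) with hG
    have hmemG : ∀ g, g ∈ G ↔ (1 ≤ g ∧ g ≤ m - 1) ∨ ∃ f ∈ F1, m + f = g := by
      intro g
      simp [hG, Finset.mem_union, Finset.mem_Icc, Finset.mem_image]
    have hF1' : ∀ f ∈ F1, 1 ≤ f ∧ f ≤ m - 1 := by
      intro f hf
      have := hF1 hf
      simpa [Finset.mem_Icc] using this
    have hbound : ∀ g ∈ G, 1 ≤ g ∧ g ≤ 2 * m - 1 := by
      intro g hg
      rcases (hmemG g).1 hg with h | ⟨f, hf, rfl⟩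
      · omega
      · have := hF1' f hf; omega
    have hsmall : ∀ k, 0 < k → k < m → k ∈ G := by
      intro k hk hkm
      rw [hmemG]; left; omega
    have hmnot : m ∉ G := by
      rw [hmemG]
      push_neg
      constructor
      · omega
      · intro f hf; have := hF1' f hf; omega
    have hgap : IsGapset G := by
      constructor
      · intro g hg; exact (hbound g hg).1
      · intro z hz x y hx hy hxy
        rcases (hmemG z).1 hz with h | ⟨f, hf, hzf⟩
        · left; rw [hmemG]; left; omega
        · have hfb := hF1' f hf
          rcases le_total x y with hle | hle
          · left; exact hsmall x hx (by omega)
          · right; exact hsmall y hy (by omega)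
    have hmult : gmult G = m := gmult_eq (by omega) hmnot hsmall
    refine ⟨hgap, hmult, ?_⟩
    have hcond : gcond G ≤ 2 * m := by
      unfold gcond
      split
      · next h =>
        have := hbound _ (G.max'_mem h)
        omega
      · omega
    unfold gdepth
    rw [hmult]
    rw [Nat.div_le_iff_le_mul_add_pred (by omega)]
    omega
  · intro G hgap hdepth
    rcases eq_or_ne G ∅ with rfl | hne
    · exact ⟨1, ∅, le_refl 1, by simp, by simp⟩
    · have hGne : G.Nonempty := Finset.nonempty_iff_ne_empty.2 hne
      set M := gmult G with hM
      have hSne : ∃ k, k ∈ {k : ℕ | 0 < k ∧ k ∉ G} := by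
        refine ⟨G.max' hGne + 1, Nat.succ_pos _, fun hmem => ?_⟩
        have := G.le_max' _ hmem
        omega
      have hMmem := Nat.sInf_mem hSne
      have hMpos : 0 < M := hMmem.1
      have hMnot : M ∉ G := hMmem.2
      have hsmall : ∀ k, 0 < k → k < M → k ∈ G := by
        intro k hk hkM
        by_contra hkn
        have hk' : k ∈ {k : ℕ | 0 < k ∧ k ∉ G} := ⟨hk, hkn⟩
        have : gmult G ≤ k := Nat.sInf_le hk'
        omega
      have hcond : gcond G ≤ 2 * M := by
        have hd : (gcond G + M - 1) / M ≤ 2 := hdepth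
        rw [Nat.div_le_iff_le_mul_add_pred hMpos] at hd
        omega
      have hbound : ∀ g ∈ G, g ≤ 2 * M - 1 := by
        intro g hg
        have : gcond G = G.max' hGne + 1 := dif_pos hGne
        have := G.le_max' g hg
        omega
      refine ⟨M, (G.filter (fun g => M < g)).image (fun g => g - M), hMpos, ?_, ?_⟩
      · intro f hf
        simp only [Finset.mem_image, Finset.mem_filter] at hf
        rcases hf with ⟨g, ⟨hg, hMg⟩, rfl⟩
        have := hbound g hg
        simp [Finset.mem_Icc]; omega
      · ext g
        simp only [Finset.mem_union, Finset.mem_Icc, Finset.mem_image, Finset.mem_filter]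
        constructor
        · intro hg
          have hpos := hgap.1 g hg
          have hub := hbound g hg
          have hgM : g ≠ M := fun h => hMnot (h ▸ hg)
          rcases lt_or_gt_of_ne hgM with h | h
          · left; omega
          · right; exact ⟨g - M, ⟨g, ⟨hg, h⟩, rfl⟩, by omega⟩
        · rintro (h | ⟨f, ⟨g', ⟨hg', hMg'⟩, rfl⟩, rfl⟩)
          · exact hsmall g h.1 (by omega)
          · have : M + (g' - M) = g' := by omega
            rw [this]; exact hg'
end

section
/- For all g ≥ 0, the number of gapsets of genus g and depth at most 2 equals the Fibonacci number F_{g+1} (with F_1 = F_2 = 1). -/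
/-- The number of gapsets of genus `g` and depth at most 2. -/
noncomputable def nQle2 (g : ℕ) : ℕ :=
  Nat.card {G : Finset ℕ // IsGapset G ∧ G.card = g ∧ gdepth G ≤ 2}

open Finset

/-- The explicit enumeration of gapsets of genus `g` and depth at most 2. -/
noncomputable def gapA (g : ℕ) : Finset (Finset ℕ) :=
  (range (g + 1)).biUnion fun j =>
    ((Icc (j + 2) (2 * j + 1)).powersetCard (g - j)).image fun S => Icc 1 j ∪ S

lemma mem_gapA {g : ℕ} {G : Finset ℕ} :
    G ∈ gapA g ↔ ∃ j ≤ g, ∃ S ⊆ Icc (j + 2) (2 * j + 1),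
      S.card = g - j ∧ G = Icc 1 j ∪ S := by
  simp only [gapA, mem_biUnion, mem_image, mem_range, mem_powersetCard, Nat.lt_succ_iff]
  constructor
  · rintro ⟨j, hj, S, ⟨hS, hc⟩, rfl⟩
    exact ⟨j, hj, S, hS, hc, rfl⟩
  · rintro ⟨j, hj, S, hS, hc, rfl⟩
    exact ⟨j, hj, S, ⟨hS, hc⟩, rfl⟩

lemma gapA_char {g : ℕ} {G : Finset ℕ} {j : ℕ} {S : Finset ℕ}
    (hS : S ⊆ Icc (j + 2) (2 * j + 1)) (hG : G = Icc 1 j ∪ S) :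
    ((j + 1) ∉ G) ∧ Icc 1 j ⊆ G := by
  subst hG
  refine ⟨?_, subset_union_left⟩
  simp only [mem_union, mem_Icc, not_or]
  refine ⟨by omega, fun h => ?_⟩
  have := hS h
  simp only [mem_Icc] at this
  omega

lemma gmult_eq_s8 {g : ℕ} {G : Finset ℕ} {j : ℕ} {S : Finset ℕ}
    (hS : S ⊆ Icc (j + 2) (2 * j + 1)) (hG : G = Icc 1 j ∪ S) :
    gmult G = j + 1 := by
  obtain ⟨hnm, hsub⟩ := gapA_char (g := g) hS hG
  have hmem : (j + 1) ∈ {m : ℕ | 0 < m ∧ m ∉ G} := ⟨Nat.succ_pos j, hnm⟩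
  have hle : gmult G ≤ j + 1 := Nat.sInf_le hmem
  refine le_antisymm hle ?_
  by_contra hcon
  push_neg at hcon
  have hm : 0 < gmult G ∧ gmult G ∉ G :=
    Nat.sInf_mem (s := {m : ℕ | 0 < m ∧ m ∉ G}) ⟨j + 1, hmem⟩
  exact hm.2 (hsub (mem_Icc.mpr ⟨hm.1, by omega⟩))

lemma card_gapA (g : ℕ) :
    (gapA g).card = ∑ j ∈ range (g + 1), Nat.choose j (g - j) := by
  rw [gapA, card_biUnion]
  · refine Finset.sum_congr rfl fun j _ => ?_
    rw [Finset.card_image_of_injOn, card_powersetCard, Nat.card_Icc]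
    · congr 1
      omega
    · intro S hS T hT hST
      simp only [Finset.mem_coe, mem_powersetCard] at hS hT
      have key : ∀ U : Finset ℕ, U ⊆ Icc (j + 2) (2 * j + 1) →
          (Icc 1 j ∪ U) \ Icc 1 j = U := by
        intro U hU
        ext x
        simp only [mem_sdiff, mem_union, mem_Icc]
        constructor
        · rintro ⟨hx | hx, hnx⟩
          · exact absurd hx hnx
          · exact hx
        · intro hx
          have := hU hx
          simp only [mem_Icc] at this
          exact ⟨Or.inr hx, by omega⟩
      calc S = (Icc 1 j ∪ S) \ Icc 1 j := (key S hS.1).symm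
        _ = (Icc 1 j ∪ T) \ Icc 1 j := by
              rw [show Icc 1 j ∪ S = Icc 1 j ∪ T from hST]
        _ = T := key T hT.1
  · intro j hj k hk hjk
    simp only [Function.onFun, Finset.disjoint_left]
    intro G hGj hGk
    simp only [mem_image, mem_powersetCard] at hGj hGk
    obtain ⟨S, ⟨hS, _⟩, rfl⟩ := hGj
    obtain ⟨T, ⟨hT, _⟩, hGT⟩ := hGk
    rcases Nat.lt_or_ge j k with h | h
    · have h1 := (gapA_char (g := g) hS rfl).1
      have h2 := (gapA_char (g := g) hT hGT.symm).2
      exact h1 (h2 (by simp only [mem_Icc]; omega))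
    · have hkj : k < j := by omega
      have h1 := (gapA_char (g := g) hT hGT.symm).1
      have h2 := (gapA_char (g := g) hS rfl).2
      exact h1 (h2 (by simp only [mem_Icc]; omega))

lemma gapA_iff (g : ℕ) (G : Finset ℕ) :
    (IsGapset G ∧ G.card = g ∧ gdepth G ≤ 2) ↔ G ∈ gapA g := by
  rw [mem_gapA]
  constructor
  · rintro ⟨⟨hpos, _⟩, hcard, hdepth⟩
    -- forward direction
    set m := gmult G with hm
    have hne : {m : ℕ | 0 < m ∧ m ∉ G}.Nonempty := by
      refine ⟨G.sup id + 1, Nat.succ_pos _, fun h => ?_⟩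
      have := Finset.le_sup (f := id) h
      simp only [id_eq] at this
      omega
    have hmem := Nat.sInf_mem hne
    have hm0 : 0 < m := hmem.1
    have hmG : m ∉ G := hmem.2
    have hlow : ∀ k, 0 < k → k < m → k ∈ G := by
      intro k hk hkm
      by_contra hkG
      have hle : gmult G ≤ k :=
        Nat.sInf_le (show k ∈ {m : ℕ | 0 < m ∧ m ∉ G} from ⟨hk, hkG⟩)
      omega
    have hhigh : ∀ x ∈ G, x ≤ 2 * m - 1 := by
      intro x hx
      have hGne : G.Nonempty := ⟨x, hx⟩
      have hc : gcond G = G.max' hGne + 1 := by rw [gcond, dif_pos hGne]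
      rw [gdepth, hc] at hdepth
      have hdiv : (G.max' hGne + 1 + m - 1) / m ≤ 2 := hdepth
      have h3 : G.max' hGne + 1 + m - 1 < 3 * m := by
        by_contra h
        push_neg at h
        have := Nat.le_div_iff_mul_le hm0 |>.2 (by omega : 3 * m ≤ G.max' hGne + 1 + m - 1)
        omega
      have := Finset.le_max' G x hx
      omega
    refine ⟨m - 1, ?_, G \ Icc 1 (m - 1), ?_, ?_, ?_⟩
    · -- m - 1 ≤ g
      have hsub : Icc 1 (m - 1) ⊆ G := by
        intro k hk
        simp only [mem_Icc] at hk
        exact hlow k hk.1 (by omega)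
      have := Finset.card_le_card hsub
      rw [Nat.card_Icc] at this
      omega
    · intro x hx
      simp only [mem_sdiff, mem_Icc, not_and, not_le] at hx
      obtain ⟨hxG, hx2⟩ := hx
      have h1 : 0 < x := hpos x hxG
      have h2 : x ≤ 2 * m - 1 := hhigh x hxG
      have h3 : x ≠ m := fun h => hmG (h ▸ hxG)
      simp only [mem_Icc]
      omega
    · -- card
      have hsub : Icc 1 (m - 1) ⊆ G := by
        intro k hk
        simp only [mem_Icc] at hk
        exact hlow k hk.1 (by omega)
      rw [Finset.card_sdiff_of_subset hsub, Nat.card_Icc, hcard]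
      omega
    · -- G = Icc 1 (m-1) ∪ (G \ Icc 1 (m-1))
      have hsub : Icc 1 (m - 1) ⊆ G := by
        intro k hk
        simp only [mem_Icc] at hk
        exact hlow k hk.1 (by omega)
      rw [Finset.union_sdiff_of_subset hsub]
  · rintro ⟨j, hj, S, hS, hcS, rfl⟩
    have hbound : ∀ x ∈ Icc 1 j ∪ S, 1 ≤ x ∧ x ≤ 2 * j + 1 := by
      intro x hx
      rcases mem_union.1 hx with h | h
      · simp only [mem_Icc] at h; omega
      · have := hS h; simp only [mem_Icc] at this; omega
    have hSj : S.card ≤ j := by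
      have := Finset.card_le_card hS
      rwa [Nat.card_Icc, show 2 * j + 1 + 1 - (j + 2) = j by omega] at this
    refine ⟨⟨fun x hx => (hbound x hx).1, ?_⟩, ?_, ?_⟩
    · -- gapset condition
      intro z hz x y hx hy hxy
      have hzb := hbound z hz
      rcases le_or_gt x y with h | h
      · left
        refine mem_union.2 (Or.inl ?_)
        simp only [mem_Icc]
        omega
      · right
        refine mem_union.2 (Or.inl ?_)
        simp only [mem_Icc]
        omega
    · -- card
      rw [Finset.card_union_of_disjoint, Nat.card_Icc, hcS]
      · omega
      · simp only [Finset.disjoint_left]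
        intro x hx hxS
        have h1 := hS hxS
        simp only [mem_Icc] at hx h1
        omega
    · -- depth
      have hmult : gmult (Icc 1 j ∪ S) = j + 1 := gmult_eq_s8 (g := g) hS rfl
      rw [gdepth, hmult, gcond]
      split_ifs with hne
      · have hmax : (Icc 1 j ∪ S).max' hne ≤ 2 * j + 1 :=
          Finset.max'_le _ _ _ fun y hy => (hbound y hy).2
        have : ((Icc 1 j ∪ S).max' hne + 1 + (j + 1) - 1) / (j + 1) < 3 :=
          (Nat.div_lt_iff_lt_mul (Nat.succ_pos j)).2 (by omega)
        omega
      · simp only [Nat.zero_add]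
        have : (j + 1 - 1) / (j + 1) = 0 := Nat.div_eq_of_lt (by omega)
        omega

theorem stmt8 (g : ℕ) : nQle2 g = Nat.fib (g + 1) := by
  have h1 : nQle2 g = (gapA g).card := by
    rw [nQle2]
    rw [Nat.card_congr (Equiv.subtypeEquivRight (gapA_iff g))]
    rw [Nat.card_eq_fintype_card, Fintype.card_coe]
  rw [h1, card_gapA, Nat.fib_succ_eq_sum_choose,
    Finset.Nat.sum_antidiagonal_eq_sum_range_succ_mk]
end

section
/- For all g ≥ 2, the number of gapsets of genus g and depth at most 2 equals the number of those of genus g−1 and depth at most 2 plus the number of those of genus g−2 and depth at most 2. -/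
/- ### Auxiliary definitions -/

def toGapset (m : ℕ) (T : Finset ℕ) : Finset ℕ :=
  Finset.Ico 1 m ∪ T.image (· + (m + 1))

def pairSet (g : ℕ) : Finset (ℕ × Finset ℕ) :=
  ((Finset.range (g + 2)) ×ˢ (Finset.range (g + 1)).powerset).filter
    (fun p => 1 ≤ p.1 ∧ p.2 ⊆ Finset.range (p.1 - 1) ∧ p.1 - 1 + p.2.card = g)

lemma mem_pairSet {g : ℕ} {p : ℕ × Finset ℕ} :
    p ∈ pairSet g ↔ 1 ≤ p.1 ∧ p.2 ⊆ Finset.range (p.1 - 1) ∧ p.1 - 1 + p.2.card = g := by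
  constructor
  · intro h
    exact (Finset.mem_filter.1 h).2
  · intro h
    refine Finset.mem_filter.2 ⟨Finset.mem_product.2 ⟨?_, ?_⟩, h⟩
    · exact Finset.mem_range.2 (by omega)
    · refine Finset.mem_powerset.2 (h.2.1.trans ?_)
      intro x hx
      rw [Finset.mem_range] at hx ⊢
      omega

lemma gmult_spec (G : Finset ℕ) : 0 < gmult G ∧ gmult G ∉ G := by
  have hne : {m : ℕ | 0 < m ∧ m ∉ G}.Nonempty := by
    refine ⟨G.sup id + 1, by omega, fun h => ?_⟩
    have := Finset.le_sup (f := id) h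
    simp only [id_eq] at this
    omega
  exact Nat.sInf_mem hne

lemma mem_of_lt_gmult {G : Finset ℕ} {k : ℕ} (hk : 0 < k) (h : k < gmult G) : k ∈ G := by
  by_contra hkG
  have : gmult G ≤ k :=
    Nat.sInf_le (show k ∈ {m : ℕ | 0 < m ∧ m ∉ G} from ⟨hk, hkG⟩)
  omega

lemma mem_toGapset {m : ℕ} {T : Finset ℕ} {z : ℕ} :
    z ∈ toGapset m T ↔ (1 ≤ z ∧ z < m) ∨ ∃ t ∈ T, z = t + (m + 1) := by
  simp [toGapset, Finset.mem_union, Finset.mem_Ico, Finset.mem_image, eq_comm]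

lemma toGapset_lt {m : ℕ} {T : Finset ℕ} (hT : T ⊆ Finset.range (m - 1)) {z : ℕ}
    (hz : z ∈ toGapset m T) : z < 2 * m := by
  rcases mem_toGapset.1 hz with h | ⟨t, ht, rfl⟩
  · omega
  · have := Finset.mem_range.1 (hT ht)
    omega

lemma isGapset_toGapset {m : ℕ} {T : Finset ℕ} (hT : T ⊆ Finset.range (m - 1)) :
    IsGapset (toGapset m T) := by
  constructor
  · intro z hz
    rcases mem_toGapset.1 hz with h | ⟨t, ht, rfl⟩ <;> omega
  · intro z hz x y hx hy hxy
    have hz2 := toGapset_lt hT hz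
    rcases lt_or_ge x m with h | h
    · exact Or.inl (mem_toGapset.2 (Or.inl ⟨hx, h⟩))
    · refine Or.inr (mem_toGapset.2 (Or.inl ⟨hy, by omega⟩))

lemma card_toGapset {m : ℕ} (T : Finset ℕ) (hm : 1 ≤ m) :
    (toGapset m T).card = m - 1 + T.card := by
  rw [toGapset, Finset.card_union_of_disjoint, Nat.card_Ico,
    Finset.card_image_of_injective _ (add_left_injective _)]
  rw [Finset.disjoint_left]
  intro a ha hb
  rw [Finset.mem_Ico] at ha
  rcases Finset.mem_image.1 hb with ⟨t, _, rfl⟩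
  omega

lemma gmult_toGapset {m : ℕ} (T : Finset ℕ) (hm : 1 ≤ m) :
    gmult (toGapset m T) = m := by
  have hmem : m ∈ {k : ℕ | 0 < k ∧ k ∉ toGapset m T} := by
    refine ⟨hm, fun h => ?_⟩
    rcases mem_toGapset.1 h with h | ⟨t, _, h⟩ <;> omega
  have h1 : gmult (toGapset m T) ≤ m := Nat.sInf_le hmem
  have h2 := Nat.sInf_mem ⟨m, hmem⟩
  rcases h2 with ⟨hpos, hnot⟩
  by_contra hne
  exact hnot (mem_toGapset.2 (Or.inl ⟨hpos, by unfold gmult at *; omega⟩))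

lemma gdepth_toGapset {m : ℕ} {T : Finset ℕ} (hT : T ⊆ Finset.range (m - 1)) (hm : 1 ≤ m) :
    gdepth (toGapset m T) ≤ 2 := by
  have hc : gcond (toGapset m T) ≤ 2 * m := by
    unfold gcond
    split
    · next h =>
      have := toGapset_lt hT ((toGapset m T).max'_mem h)
      omega
    · omega
  unfold gdepth
  rw [gmult_toGapset T hm]
  have : (gcond (toGapset m T) + m - 1) / m < 3 :=
    Nat.div_lt_of_lt_mul (by omega)
  omega

lemma toGapset_mem {g : ℕ} {p : ℕ × Finset ℕ} (hp : p ∈ pairSet g) :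
    IsGapset (toGapset p.1 p.2) ∧ (toGapset p.1 p.2).card = g ∧ gdepth (toGapset p.1 p.2) ≤ 2 := by
  obtain ⟨hm, hT, hcard⟩ := mem_pairSet.1 hp
  exact ⟨isGapset_toGapset hT, by rw [card_toGapset _ hm]; exact hcard, gdepth_toGapset hT hm⟩

lemma toGapset_inj {g : ℕ} {p q : ℕ × Finset ℕ} (hp : p ∈ pairSet g) (hq : q ∈ pairSet g)
    (h : toGapset p.1 p.2 = toGapset q.1 q.2) : p = q := by
  obtain ⟨hm, hT, _⟩ := mem_pairSet.1 hp
  obtain ⟨hm', hT', _⟩ := mem_pairSet.1 hq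
  have hmm : p.1 = q.1 := by
    rw [← gmult_toGapset p.2 hm, ← gmult_toGapset q.2 hm', h]
  have hTT : p.2 = q.2 := by
    ext t
    constructor
    · intro ht
      have : t + (p.1 + 1) ∈ toGapset q.1 q.2 := by
        rw [← h]; exact mem_toGapset.2 (Or.inr ⟨t, ht, rfl⟩)
      rcases mem_toGapset.1 this with h1 | ⟨t', ht', h1⟩
      · omega
      · rw [hmm] at h1
        have : t = t' := by omega
        rwa [this]
    · intro ht
      have : t + (q.1 + 1) ∈ toGapset p.1 p.2 := by
        rw [h]; exact mem_toGapset.2 (Or.inr ⟨t, ht, rfl⟩)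
      rcases mem_toGapset.1 this with h1 | ⟨t', ht', h1⟩
      · omega
      · rw [hmm] at h1
        have : t = t' := by omega
        rwa [this]
  exact Prod.ext hmm hTT

lemma gcond_le {G : Finset ℕ} (hdepth : gdepth G ≤ 2) : gcond G ≤ 2 * gmult G := by
  have hm1 := (gmult_spec G).1
  unfold gdepth at hdepth
  by_contra hcon
  have : 3 ≤ (gcond G + gmult G - 1) / gmult G :=
    (Nat.le_div_iff_mul_le hm1).2 (by omega)
  omega

lemma toGapset_surj {g : ℕ} {G : Finset ℕ}
    (h : IsGapset G ∧ G.card = g ∧ gdepth G ≤ 2) :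
    ∃ p ∈ pairSet g, toGapset p.1 p.2 = G := by
  obtain ⟨⟨hpos, _⟩, hcard, hdepth⟩ := h
  obtain ⟨hm1, hmG⟩ := gmult_spec G
  have hcle := gcond_le hdepth
  have hlt : ∀ z ∈ G, z < 2 * gmult G := by
    intro z hz
    have hne : G.Nonempty := ⟨z, hz⟩
    have hc : gcond G = G.max' hne + 1 := by rw [gcond, dif_pos hne]
    have hzmax : z ≤ G.max' hne := Finset.le_max' G z hz
    omega
  set m := gmult G with hm
  set T : Finset ℕ := (G.filter (fun z => m < z)).image (· - (m + 1)) with hTdef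
  have hTm : ∀ t ∈ T, ∃ w ∈ G, m < w ∧ t = w - (m + 1) := by
    intro t ht
    rcases Finset.mem_image.1 ht with ⟨w, hw, rfl⟩
    rcases Finset.mem_filter.1 hw with ⟨hw1, hw2⟩
    exact ⟨w, hw1, hw2, rfl⟩
  have hTsub : T ⊆ Finset.range (m - 1) := by
    intro t ht
    obtain ⟨w, hw, hw2, rfl⟩ := hTm t ht
    have := hlt w hw
    rw [Finset.mem_range]
    omega
  have heq : toGapset m T = G := by
    ext z
    rw [mem_toGapset]
    constructor
    · rintro (⟨h1, h2⟩ | ⟨t, ht, rfl⟩)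
      · exact mem_of_lt_gmult h1 h2
      · obtain ⟨w, hw, hw2, rfl⟩ := hTm t ht
        have : w - (m + 1) + (m + 1) = w := by omega
        rwa [this]
    · intro hz
      have h1 := hpos z hz
      have h2 : z ≠ m := fun h => hmG (by rw [← h]; exact hz)
      rcases lt_or_ge z m with h3 | h3
      · exact Or.inl ⟨h1, h3⟩
      · refine Or.inr ⟨z - (m + 1), Finset.mem_image.2 ⟨z, Finset.mem_filter.2 ⟨hz, by omega⟩, rfl⟩, by omega⟩
  refine ⟨(m, T), mem_pairSet.2 ⟨hm1, hTsub, ?_⟩, heq⟩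
  show m - 1 + T.card = g
  have := card_toGapset T hm1
  rw [heq] at this
  omega

lemma nQle2_eq_card_pairSet (g : ℕ) : nQle2 g = (pairSet g).card := by
  rw [nQle2, ← Nat.card_eq_finsetCard]
  refine (Nat.card_eq_of_bijective
    (fun p : {x : ℕ × Finset ℕ // x ∈ pairSet g} =>
      (⟨toGapset p.1.1 p.1.2, toGapset_mem p.2⟩ :
        {G : Finset ℕ // IsGapset G ∧ G.card = g ∧ gdepth G ≤ 2})) ⟨?_, ?_⟩).symm
  · rintro ⟨p, hp⟩ ⟨q, hq⟩ h
    exact Subtype.ext (toGapset_inj hp hq (congrArg Subtype.val h))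
  · rintro ⟨G, hG⟩
    obtain ⟨p, hp, hpe⟩ := toGapset_surj hG
    exact ⟨⟨p, hp⟩, Subtype.ext hpe⟩

lemma image_sub_add {T : Finset ℕ} (h : ∀ t ∈ T, 1 ≤ t) :
    (T.image (· - 1)).image (· + 1) = T := by
  ext a
  simp only [Finset.mem_image]
  constructor
  · rintro ⟨b, ⟨t, ht, rfl⟩, rfl⟩
    have := h t ht
    have h2 : t - 1 + 1 = t := by omega
    rwa [h2]
  · intro ha
    exact ⟨a - 1, ⟨a, ha, rfl⟩, by have := h a ha; omega⟩

lemma image_add_sub (T : Finset ℕ) : (T.image (· + 1)).image (· - 1) = T := by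
  ext a
  simp only [Finset.mem_image]
  constructor
  · rintro ⟨b, ⟨t, ht, rfl⟩, rfl⟩
    simpa using ht
  · intro ha
    exact ⟨a + 1, ⟨a, ha, rfl⟩, by omega⟩

lemma card_image_sub {T : Finset ℕ} (h : ∀ t ∈ T, 1 ≤ t) :
    (T.image (· - 1)).card = T.card :=
  Finset.card_image_of_injOn (fun x hx y hy hxy => by
    have := h x hx; have := h y hy; omega)

lemma m_ge_two {g : ℕ} (hg : 2 ≤ g) {p : ℕ × Finset ℕ} (hp : p ∈ pairSet g) : 2 ≤ p.1 := by
  obtain ⟨hm, hT, hc⟩ := mem_pairSet.1 hp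
  by_contra h
  have h1 : p.1 = 1 := by omega
  have : p.2 = ∅ := by
    refine Finset.eq_empty_of_forall_notMem (fun t ht => ?_)
    have := Finset.mem_range.1 (hT ht)
    omega
  rw [this] at hc
  simp [h1] at hc
  omega

lemma card_pairSet_rec (g : ℕ) (hg : 2 ≤ g) :
    (pairSet g).card = (pairSet (g - 1)).card + (pairSet (g - 2)).card := by
  classical
  rw [← Finset.card_filter_add_card_filter_not (s := pairSet g)
    (p := fun p => (0 : ℕ) ∉ p.2)]
  congr 1
  · -- 0 ∉ T case ↔ pairSet (g-1)
    refine Finset.card_nbij' (fun p => (p.1 - 1, p.2.image (· - 1)))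
      (fun q => (q.1 + 1, q.2.image (· + 1))) ?_ ?_ ?_ ?_
    · rintro ⟨m, T⟩ hp
      obtain ⟨hp1, h0⟩ := Finset.mem_filter.1 hp
      obtain ⟨hm, hT, hc⟩ := mem_pairSet.1 hp1
      have hm2 := m_ge_two hg hp1
      simp only at h0 hm hT hc hm2 ⊢
      have hT1 : ∀ t ∈ T, 1 ≤ t := fun t ht => by
        rcases Nat.eq_zero_or_pos t with h | h
        · exact absurd (h ▸ ht) h0
        · exact h
      refine mem_pairSet.2 ⟨by omega, ?_, ?_⟩
      · intro a ha
        rcases Finset.mem_image.1 ha with ⟨t, ht, rfl⟩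
        have := Finset.mem_range.1 (hT ht)
        have := hT1 t ht
        rw [Finset.mem_range]
        omega
      · rw [card_image_sub hT1]
        omega
    · rintro ⟨m, T⟩ hq
      obtain ⟨hm, hT, hc⟩ := mem_pairSet.1 hq
      simp only at hm hT hc ⊢
      refine Finset.mem_filter.2 ⟨mem_pairSet.2 ⟨by omega, ?_, ?_⟩, ?_⟩
      · intro a ha
        rcases Finset.mem_image.1 ha with ⟨t, ht, rfl⟩
        have := Finset.mem_range.1 (hT ht)
        rw [Finset.mem_range]
        omega
      · rw [Finset.card_image_of_injective _ (add_left_injective _)]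
        omega
      · simp only [Finset.mem_image]
        rintro ⟨t, _, h⟩
        omega
    · rintro ⟨m, T⟩ hp
      obtain ⟨hp1, h0⟩ := Finset.mem_filter.1 hp
      obtain ⟨hm, hT, hc⟩ := mem_pairSet.1 hp1
      have hm2 := m_ge_two hg hp1
      simp only at h0 hm hm2 ⊢
      have hT1 : ∀ t ∈ T, 1 ≤ t := fun t ht => by
        rcases Nat.eq_zero_or_pos t with h | h
        · exact absurd (h ▸ ht) h0
        · exact h
      rw [Prod.mk.injEq]
      exact ⟨by omega, image_sub_add hT1⟩
    · rintro ⟨m, T⟩ hq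
      obtain ⟨hm, _, _⟩ := mem_pairSet.1 hq
      simp only at hm ⊢
      rw [Prod.mk.injEq]
      exact ⟨by omega, image_add_sub T⟩
  · -- 0 ∈ T case ↔ pairSet (g-2)
    refine Finset.card_nbij' (fun p => (p.1 - 1, (p.2.erase 0).image (· - 1)))
      (fun q => (q.1 + 1, insert 0 (q.2.image (· + 1)))) ?_ ?_ ?_ ?_
    · rintro ⟨m, T⟩ hp
      obtain ⟨hp1, h0⟩ := Finset.mem_filter.1 hp
      obtain ⟨hm, hT, hc⟩ := mem_pairSet.1 hp1
      have hm2 := m_ge_two hg hp1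
      simp only [not_not] at h0 hm hT hc hm2 ⊢
      have hT1 : ∀ t ∈ T.erase 0, 1 ≤ t := fun t ht => by
        have := (Finset.mem_erase.1 ht).1
        omega
      have hTc : T.card ≥ 1 := Finset.card_pos.2 ⟨0, h0⟩
      refine mem_pairSet.2 ⟨by omega, ?_, ?_⟩
      · intro a ha
        rcases Finset.mem_image.1 ha with ⟨t, ht, rfl⟩
        have h1 := Finset.mem_range.1 (hT (Finset.mem_of_mem_erase ht))
        have := hT1 t ht
        rw [Finset.mem_range]
        omega
      · rw [card_image_sub hT1, Finset.card_erase_of_mem h0]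
        omega
    · rintro ⟨m, T⟩ hq
      obtain ⟨hm, hT, hc⟩ := mem_pairSet.1 hq
      simp only at hm hT hc ⊢
      have h0T : (0 : ℕ) ∉ T.image (· + 1) := by
        simp only [Finset.mem_image]
        rintro ⟨t, _, h⟩
        omega
      refine Finset.mem_filter.2 ⟨mem_pairSet.2 ⟨by omega, ?_, ?_⟩, ?_⟩
      · intro a ha
        rcases Finset.mem_insert.1 ha with rfl | ha
        · rw [Finset.mem_range]
          omega
        · rcases Finset.mem_image.1 ha with ⟨t, ht, rfl⟩
          have := Finset.mem_range.1 (hT ht)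
          rw [Finset.mem_range]
          omega
      · rw [Finset.card_insert_of_notMem h0T,
          Finset.card_image_of_injective _ (add_left_injective _)]
        omega
      · simp
    · rintro ⟨m, T⟩ hp
      obtain ⟨hp1, h0⟩ := Finset.mem_filter.1 hp
      obtain ⟨hm, hT, hc⟩ := mem_pairSet.1 hp1
      have hm2 := m_ge_two hg hp1
      simp only [not_not] at h0 hm hm2 ⊢
      have hT1 : ∀ t ∈ T.erase 0, 1 ≤ t := fun t ht => by
        have := (Finset.mem_erase.1 ht).1
        omega
      rw [Prod.mk.injEq]
      refine ⟨by omega, ?_⟩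
      rw [image_sub_add hT1, Finset.insert_erase h0]
    · rintro ⟨m, T⟩ hq
      obtain ⟨hm, _, _⟩ := mem_pairSet.1 hq
      simp only at hm ⊢
      have h0T : (0 : ℕ) ∉ T.image (· + 1) := by
        simp only [Finset.mem_image]
        rintro ⟨t, _, h⟩
        omega
      rw [Prod.mk.injEq]
      refine ⟨by omega, ?_⟩
      rw [Finset.erase_insert h0T, image_add_sub T]

theorem stmt9 (g : ℕ) (hg : 2 ≤ g) :
    nQle2 g = nQle2 (g - 1) + nQle2 (g - 2) := by
  rw [nQle2_eq_card_pairSet, nQle2_eq_card_pairSet, nQle2_eq_card_pairSet]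
  exact card_pairSet_rec g hg
end

section
/- Let G = G_0 ⊔ G_1 ⊔ G_2 be a gapset of multiplicity m and depth at most 3, with G_1 = m + F_1 and G_2 = 2m + F_2 where [1,m−1] ⊇ F_1 ⊇ F_2. Then H = [1,m] ∪ ((m+1) + F_1) ∪ (2(m+1) + F_2) is a gapset of multiplicity m+1, depth at most 3, and genus one more than that of G. -/
theorem stmt10 (m : ℕ) (hm : 1 ≤ m) (F1 F2 G H : Finset ℕ)
    (hF1 : F1 ⊆ Finset.Icc 1 (m - 1)) (hF2 : F2 ⊆ F1)
    (hGdef : G = Finset.Icc 1 (m - 1) ∪ F1.image (fun x => m + x)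
        ∪ F2.image (fun x => 2 * m + x))
    (hG : IsGapset G) (hmul : gmult G = m) (hd : gdepth G ≤ 3)
    (hHdef : H = Finset.Icc 1 m ∪ F1.image (fun x => (m + 1) + x)
        ∪ F2.image (fun x => 2 * (m + 1) + x)) :
    IsGapset H ∧ gmult H = m + 1 ∧ gdepth H ≤ 3 ∧ H.card = G.card + 1 := by
  have hF1' : ∀ f ∈ F1, 1 ≤ f ∧ f ≤ m - 1 := fun f hf => Finset.mem_Icc.mp (hF1 hf)
  have hF2' : ∀ f ∈ F2, 1 ≤ f ∧ f ≤ m - 1 := fun f hf => hF1' f (hF2 hf)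
  have hmemH : ∀ x, x ∈ H ↔
      (1 ≤ x ∧ x ≤ m) ∨ (∃ f ∈ F1, m + 1 + f = x) ∨ (∃ f ∈ F2, 2 * (m + 1) + f = x) := by
    intro x
    simp [hHdef, Finset.mem_union, Finset.mem_image, Finset.mem_Icc]
  have hmemG : ∀ x, x ∈ G ↔
      (1 ≤ x ∧ x ≤ m - 1) ∨ (∃ f ∈ F1, m + f = x) ∨ (∃ f ∈ F2, 2 * m + f = x) := by
    intro x
    simp [hGdef, Finset.mem_union, Finset.mem_image, Finset.mem_Icc]
  -- H is a gapset
  have hgapH : IsGapset H := by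
    constructor
    · intro g hg
      rcases (hmemH g).mp hg with h | ⟨f, hf, h⟩ | ⟨f, hf, h⟩ <;> omega
    · intro z hz x y hx hy hxy
      rcases (hmemH z).mp hz with hzc | ⟨f, hf, hfz⟩ | ⟨f, hf, hfz⟩
      · left; exact (hmemH x).mpr (Or.inl (by omega))
      · -- z = m+1+f, f ∈ F1, so z ≤ 2m
        obtain ⟨hf1, hf2⟩ := hF1' f hf
        by_cases hxm : x ≤ m
        · left; exact (hmemH x).mpr (Or.inl (by omega))
        · right; exact (hmemH y).mpr (Or.inl (by omega))
      · -- z = 2(m+1)+f, f ∈ F2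
        obtain ⟨hf1, hf2⟩ := hF2' f hf
        by_cases hxm : x ≤ m
        · left; exact (hmemH x).mpr (Or.inl (by omega))
        by_cases hym : y ≤ m
        · right; exact (hmemH y).mpr (Or.inl (by omega))
        by_cases hxm1 : x = m + 1
        · right
          refine (hmemH y).mpr (Or.inr (Or.inl ⟨f, hF2 hf, by omega⟩))
        by_cases hym1 : y = m + 1
        · left
          refine (hmemH x).mpr (Or.inr (Or.inl ⟨f, hF2 hf, by omega⟩))
        · -- x ≥ m+2 and y ≥ m+2
          set a := x - (m + 1) with ha
          set b := y - (m + 1) with hb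
          have ha1 : 1 ≤ a := by omega
          have hb1 : 1 ≤ b := by omega
          have hab : a + b = f := by omega
          have hzG : 2 * m + f ∈ G :=
            (hmemG _).mpr (Or.inr (Or.inr ⟨f, hf, rfl⟩))
          have := hG.2 _ hzG (m + a) (m + b) (by omega) (by omega) (by omega)
          rcases this with hma | hmb
          · rcases (hmemG _).mp hma with h | ⟨f', hf', h⟩ | ⟨f', hf', h⟩
            · omega
            · left
              have heq : f' = a := by omega
              exact (hmemH x).mpr (Or.inr (Or.inl ⟨f', hf', by omega⟩))
            · obtain ⟨hf1', hf2'⟩ := hF2' f' hf'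
              omega
          · rcases (hmemG _).mp hmb with h | ⟨f', hf', h⟩ | ⟨f', hf', h⟩
            · omega
            · right
              have heq : f' = b := by omega
              exact (hmemH y).mpr (Or.inr (Or.inl ⟨f', hf', by omega⟩))
            · obtain ⟨hf1', hf2'⟩ := hF2' f' hf'
              omega
  have hm1notH : m + 1 ∉ H := by
    intro h
    rcases (hmemH _).mp h with h | ⟨f, hf, h⟩ | ⟨f, hf, h⟩
    · omega
    · obtain ⟨hf1, hf2⟩ := hF1' f hf; omega
    · obtain ⟨hf1, hf2⟩ := hF2' f hf; omega
  have hmultH : gmult H = m + 1 := by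
    rw [gmult]
    have hne : ({k : ℕ | 0 < k ∧ k ∉ H} : Set ℕ).Nonempty := ⟨m + 1, by omega, hm1notH⟩
    apply le_antisymm
    · exact Nat.sInf_le ⟨by omega, hm1notH⟩
    · by_contra hlt
      push_neg at hlt
      have hmem := Nat.sInf_mem hne
      simp only [Set.mem_setOf_eq] at hmem
      obtain ⟨h1, h2⟩ := hmem
      exact h2 ((hmemH _).mpr (Or.inl (by omega)))
  have hHne : H.Nonempty := ⟨1, (hmemH 1).mpr (Or.inl (by omega))⟩
  have hmaxle : H.max' hHne ≤ 3 * m + 1 := by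
    apply Finset.max'_le
    intro y hy
    rcases (hmemH y).mp hy with h | ⟨f, hf, h⟩ | ⟨f, hf, h⟩
    · omega
    · obtain ⟨hf1, hf2⟩ := hF1' f hf; omega
    · obtain ⟨hf1, hf2⟩ := hF2' f hf; omega
  have hcondH : gcond H ≤ 3 * m + 2 := by
    rw [gcond, dif_pos hHne]; omega
  have hdepthH : gdepth H ≤ 3 := by
    rw [gdepth, hmultH]
    have : gcond H + (m + 1) - 1 ≤ 3 * (m + 1) + m := by omega
    calc (gcond H + (m + 1) - 1) / (m + 1) ≤ (3 * (m + 1) + m) / (m + 1) :=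
          Nat.div_le_div_right this
      _ ≤ 3 := by
          apply Nat.lt_succ_iff.mp
          rw [Nat.div_lt_iff_lt_mul (by omega : 0 < m + 1)]
          omega
  -- cardinality
  have hinj1 : ∀ c : ℕ, Function.Injective (fun x : ℕ => c + x) := by
    intro c x y h; simpa using h
  have hcardH : H.card = m + F1.card + F2.card := by
    rw [hHdef]
    rw [Finset.card_union_of_disjoint, Finset.card_union_of_disjoint]
    · rw [Finset.card_image_of_injective _ (hinj1 (m+1)),
        Finset.card_image_of_injective _ (hinj1 (2*(m+1))), Nat.card_Icc]
      omega
    · rw [Finset.disjoint_left]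
      intro a ha hb
      rw [Finset.mem_Icc] at ha
      simp only [Finset.mem_image] at hb
      obtain ⟨f, hf, hfa⟩ := hb
      obtain ⟨hf1, hf2⟩ := hF1' f hf
      omega
    · rw [Finset.disjoint_left]
      intro a ha hb
      simp only [Finset.mem_union, Finset.mem_image, Finset.mem_Icc] at ha hb
      obtain ⟨f, hf, hfa⟩ := hb
      obtain ⟨hf1, hf2⟩ := hF2' f hf
      rcases ha with h | ⟨f', hf', h⟩
      · omega
      · obtain ⟨hf1', hf2'⟩ := hF1' f' hf'; omega
  have hcardG : G.card = (m - 1) + F1.card + F2.card := by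
    rw [hGdef]
    rw [Finset.card_union_of_disjoint, Finset.card_union_of_disjoint]
    · rw [Finset.card_image_of_injective _ (hinj1 m),
        Finset.card_image_of_injective _ (hinj1 (2*m)), Nat.card_Icc]
      omega
    · rw [Finset.disjoint_left]
      intro a ha hb
      rw [Finset.mem_Icc] at ha
      simp only [Finset.mem_image] at hb
      obtain ⟨f, hf, hfa⟩ := hb
      obtain ⟨hf1, hf2⟩ := hF1' f hf
      omega
    · rw [Finset.disjoint_left]
      intro a ha hb
      simp only [Finset.mem_union, Finset.mem_image, Finset.mem_Icc] at ha hb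
      obtain ⟨f, hf, hfa⟩ := hb
      obtain ⟨hf1, hf2⟩ := hF2' f hf
      rcases ha with h | ⟨f', hf', h⟩
      · omega
      · obtain ⟨hf1', hf2'⟩ := hF1' f' hf'; omega
  exact ⟨hgapH, hmultH, hdepthH, by omega⟩
end

section
/- Let G = G_0 ⊔ G_1 ⊔ G_2 be a gapset of multiplicity m and depth at most 3, with G_1 = m + F_1 and G_2 = 2m + F_2 where [1,m−1] ⊇ F_1 ⊇ F_2. Then H' = [1,m] ∪ ((m+1) + (F_1 ∪ {m})) ∪ (2(m+1) + F_2) is a gapset of multiplicity m+1, depth at most 3, and genus two more than that of G. -/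
theorem stmt11 (m : ℕ) (hm : 1 ≤ m) (F1 F2 G H' : Finset ℕ)
    (hF1 : F1 ⊆ Finset.Icc 1 (m - 1)) (hF2 : F2 ⊆ F1)
    (hGdef : G = Finset.Icc 1 (m - 1) ∪ F1.image (fun x => m + x)
        ∪ F2.image (fun x => 2 * m + x))
    (hG : IsGapset G) (hmul : gmult G = m) (hd : gdepth G ≤ 3)
    (hHdef : H' = Finset.Icc 1 m ∪ (insert m F1).image (fun x => (m + 1) + x)
        ∪ F2.image (fun x => 2 * (m + 1) + x)) :
    IsGapset H' ∧ gmult H' = m + 1 ∧ gdepth H' ≤ 3 ∧ H'.card = G.card + 2 := by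
  have hF1' : ∀ x ∈ F1, 1 ≤ x ∧ x ≤ m - 1 := fun x hx => Finset.mem_Icc.mp (hF1 hx)
  have hF2' : ∀ x ∈ F2, 1 ≤ x ∧ x ≤ m - 1 := fun x hx => hF1' x (hF2 hx)
  -- membership characterization of H'
  have hHmem : ∀ n : ℕ, n ∈ H' ↔
      ((1 ≤ n ∧ n ≤ m) ∨ (∃ t, (t = m ∨ t ∈ F1) ∧ n = m + 1 + t) ∨
        (∃ t ∈ F2, n = 2 * (m + 1) + t)) := by
    intro n
    rw [hHdef]
    simp only [Finset.mem_union, Finset.mem_image, Finset.mem_Icc, Finset.mem_insert]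
    constructor
    · rintro ((h | ⟨t, (rfl | ht), rfl⟩) | ⟨t, ht, rfl⟩)
      · exact Or.inl h
      · exact Or.inr (Or.inl ⟨t, Or.inl rfl, rfl⟩)
      · exact Or.inr (Or.inl ⟨t, Or.inr ht, rfl⟩)
      · exact Or.inr (Or.inr ⟨t, ht, rfl⟩)
    · rintro (h | ⟨t, (rfl | ht), rfl⟩ | ⟨t, ht, rfl⟩)
      · exact Or.inl (Or.inl h)
      · exact Or.inl (Or.inr ⟨t, Or.inl rfl, rfl⟩)
      · exact Or.inl (Or.inr ⟨t, Or.inr ht, rfl⟩)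
      · exact Or.inr ⟨t, ht, rfl⟩
  have hIccH : ∀ n, 1 ≤ n → n ≤ m → n ∈ H' := by
    intro n h1 h2; exact (hHmem n).mpr (Or.inl ⟨h1, h2⟩)
  have hMidH : ∀ t, (t = m ∨ t ∈ F1) → m + 1 + t ∈ H' := by
    intro t ht; exact (hHmem (m+1+t)).mpr (Or.inr (Or.inl ⟨t, ht, rfl⟩))
  -- key lemma from G being a gapset
  have key : ∀ f ∈ F2, ∀ a b : ℕ, 0 < a → 0 < b → f = a + b → a ∈ F1 ∨ b ∈ F1 := by
    intro f hf a b ha hb hab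
    obtain ⟨hf1, hf2⟩ := hF2' f hf
    have hz : 2 * m + f ∈ G := by
      rw [hGdef]
      exact Finset.mem_union_right _ (Finset.mem_image.mpr ⟨f, hf, rfl⟩)
    have hmemG : ∀ c : ℕ, 1 ≤ c → c ≤ m - 1 → m + c ∈ G → c ∈ F1 := by
      intro c hc1 hc2 hc
      rw [hGdef] at hc
      simp only [Finset.mem_union, Finset.mem_image, Finset.mem_Icc] at hc
      rcases hc with (h | ⟨t, ht, hte⟩) | ⟨t, ht, hte⟩
      · omega
      · have := hF1' t ht; have : c = t := by omega
        rwa [this]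
      · have := hF2' t ht; omega
    have := hG.2 _ hz (m + a) (m + b) (by omega) (by omega) (by omega)
    rcases this with h | h
    · exact Or.inl (hmemG a ha (by omega) h)
    · exact Or.inr (hmemG b hb (by omega) h)
  have hgap : IsGapset H' := by
    constructor
    · intro g hg
      rcases (hHmem g).mp hg with h | ⟨t, ht, rfl⟩ | ⟨t, ht, rfl⟩ <;> omega
    · intro z hz x y hx hy hxy
      rcases (hHmem z).mp hz with h | ⟨t, ht, rfl⟩ | ⟨t, ht, rfl⟩
      · exact Or.inl (hIccH x hx (by omega))
      · -- z = m+1+t, t ≤ m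
        have htm : 1 ≤ t ∧ t ≤ m := by
          rcases ht with rfl | ht
          · omega
          · have := hF1' t ht; omega
        by_cases hxm : x ≤ m
        · exact Or.inl (hIccH x hx hxm)
        · exact Or.inr (hIccH y hy (by omega))
      · -- z = 2m+2+t, t ∈ F2
        have htm := hF2' t ht
        by_cases hxm : x ≤ m
        · exact Or.inl (hIccH x hx hxm)
        by_cases hym : y ≤ m
        · exact Or.inr (hIccH y hy hym)
        -- both ≥ m+1
        have hx1 : m + 1 ≤ x := by omega
        have hy1 : m + 1 ≤ y := by omega
        set a := x - (m + 1) with hadef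
        set b := y - (m + 1) with hbdef
        have hab : t = a + b := by omega
        rcases Nat.eq_zero_or_pos a with ha0 | hapos
        · -- y = m+1+t
          right
          have : y = m + 1 + t := by omega
          rw [this]; exact hMidH t (Or.inr (hF2 ht))
        rcases Nat.eq_zero_or_pos b with hb0 | hbpos
        · left
          have : x = m + 1 + t := by omega
          rw [this]; exact hMidH t (Or.inr (hF2 ht))
        rcases key t ht a b hapos hbpos hab with h | h
        · left
          have : x = m + 1 + a := by omega
          rw [this]; exact hMidH a (Or.inr h)
        · right
          have : y = m + 1 + b := by omega
          rw [this]; exact hMidH b (Or.inr h)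
  have hm1notH : m + 1 ∉ H' := by
    rw [hHmem]
    push_neg
    refine ⟨by omega, ?_, ?_⟩
    · rintro t (rfl | ht)
      · omega
      · have := hF1' t ht; omega
    · intro t ht; have := hF2' t ht; omega
  have hmulH : gmult H' = m + 1 := by
    unfold gmult
    have hmem : m + 1 ∈ {k : ℕ | 0 < k ∧ k ∉ H'} := ⟨by omega, hm1notH⟩
    apply le_antisymm (Nat.sInf_le hmem)
    by_contra hlt
    push_neg at hlt
    have hne : {k : ℕ | 0 < k ∧ k ∉ H'}.Nonempty := ⟨m + 1, hmem⟩
    have hsm := Nat.sInf_mem hne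
    obtain ⟨hp, hnot⟩ := hsm
    exact hnot (hIccH _ hp (by omega))
  have hne : H'.Nonempty := ⟨1, hIccH 1 le_rfl hm⟩
  have hmax : H'.max' hne ≤ 3 * m + 1 := by
    apply Finset.max'_le
    intro n hn
    rcases (hHmem n).mp hn with h | ⟨t, ht, rfl⟩ | ⟨t, ht, rfl⟩
    · omega
    · rcases ht with rfl | ht
      · omega
      · have := hF1' t ht; omega
    · have := hF2' t ht; omega
  have hcondH : gcond H' ≤ 3 * m + 2 := by
    unfold gcond
    rw [dif_pos hne]
    omega
  have hdepthH : gdepth H' ≤ 3 := by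
    unfold gdepth
    rw [hmulH]
    have h4 : (gcond H' + (m + 1) - 1) / (m + 1) < 4 := by
      rw [Nat.div_lt_iff_lt_mul (by omega)]
      omega
    omega
  -- cardinalities
  have hinj : ∀ c : ℕ, Function.Injective (fun x : ℕ => c + x) := by
    intro c x y h; simpa using h
  have hcardH : H'.card = m + (F1.card + 1) + F2.card := by
    rw [hHdef]
    rw [Finset.card_union_of_disjoint, Finset.card_union_of_disjoint]
    · rw [Finset.card_image_of_injective _ (hinj (m+1)),
        Finset.card_image_of_injective _ (hinj (2*(m+1))),
        Finset.card_insert_of_notMem (fun h => by have := hF1' m h; omega),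
        Nat.card_Icc]
      omega
    · rw [Finset.disjoint_left]
      intro n hn hn2
      rw [Finset.mem_Icc] at hn
      simp only [Finset.mem_image, Finset.mem_insert] at hn2
      obtain ⟨t, ht, hte⟩ := hn2
      rcases ht with rfl | ht
      · omega
      · have := hF1' t ht; omega
    · rw [Finset.disjoint_left]
      intro n hn hn2
      simp only [Finset.mem_union, Finset.mem_image, Finset.mem_insert, Finset.mem_Icc] at hn hn2
      obtain ⟨t, ht, hte⟩ := hn2
      have := hF2' t ht
      rcases hn with h | ⟨s, hs, hse⟩
      · omega
      · rcases hs with rfl | hs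
        · omega
        · have := hF1' s hs; omega
  have hcardG : G.card = (m - 1) + F1.card + F2.card := by
    rw [hGdef]
    rw [Finset.card_union_of_disjoint, Finset.card_union_of_disjoint]
    · rw [Finset.card_image_of_injective _ (hinj m),
        Finset.card_image_of_injective _ (hinj (2*m)),
        Nat.card_Icc]
      omega
    · rw [Finset.disjoint_left]
      intro n hn hn2
      rw [Finset.mem_Icc] at hn
      simp only [Finset.mem_image] at hn2
      obtain ⟨t, ht, hte⟩ := hn2
      have := hF1' t ht; omega
    · rw [Finset.disjoint_left]
      intro n hn hn2
      simp only [Finset.mem_union, Finset.mem_image, Finset.mem_Icc] at hn hn2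
      obtain ⟨t, ht, hte⟩ := hn2
      have := hF2' t ht
      rcases hn with h | ⟨s, hs, hse⟩
      · omega
      · have := hF1' s hs; omega
  exact ⟨hgap, hmulH, hdepthH, by omega⟩
end

section
/- For all g ≥ 2, n'_g ≥ n'_{g−1} + n'_{g−2}, where n'_g is the number of gapsets of genus g and depth at most 3. -/
/-- `n'_g`: the number of gapsets of genus `g` and depth at most 3. -/
noncomputable def n' (g : ℕ) : ℕ :=
  Nat.card {G : Finset ℕ // IsGapset G ∧ G.card = g ∧ gdepth G ≤ 3}

/-! ### Auxiliary constructions (Eliahou–Fromentin stretching maps) -/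

/-- Shift map: identity below `m`, `+1` on `[m, 2m)`, `+2` on `[2m, ∞)`. -/
def fshift (m x : ℕ) : ℕ := if x < m then x else if x < 2*m then x+1 else x+2

lemma fshift_strictMono (m : ℕ) : StrictMono (fshift m) := by
  apply strictMono_nat_of_lt_succ
  intro n
  unfold fshift
  split_ifs <;> omega

/-- Stretch a gapset of multiplicity `m`: new multiplicity `m+1`, genus `+1`. -/
def Amap (m : ℕ) (G : Finset ℕ) : Finset ℕ := insert m (G.image (fshift m))

/-- Stretch and add the gap `2m+1`: genus `+2`. -/
def Bmap (m : ℕ) (G : Finset ℕ) : Finset ℕ := insert (2*m+1) (Amap m G)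

/-- The structural facts about a gapset `G` of multiplicity `m` and depth `≤ 3`. -/
structure Good (m : ℕ) (G : Finset ℕ) : Prop where
  hm : 0 < m
  hmG : m ∉ G
  h2m : 2*m ∉ G
  hlow : ∀ x, 0 < x → x < m → x ∈ G
  hbound : ∀ x ∈ G, x < 3*m
  hgap : IsGapset G

lemma good_of {G : Finset ℕ} (hG : IsGapset G) (hd : gdepth G ≤ 3) :
    Good (gmult G) G := by
  have hne : {k : ℕ | 0 < k ∧ k ∉ G}.Nonempty := by
    refine ⟨G.sup id + 1, by omega, fun hmem => ?_⟩
    have := Finset.le_sup (f := id) hmem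
    simp only [id_eq] at this
    omega
  have hmem := Nat.sInf_mem hne
  have hm : 0 < gmult G := hmem.1
  have hmG : gmult G ∉ G := hmem.2
  have hlow : ∀ x, 0 < x → x < gmult G → x ∈ G := by
    intro x hx1 hx2
    by_contra hx
    have hle : sInf {k : ℕ | 0 < k ∧ k ∉ G} ≤ x := Nat.sInf_le ⟨hx1, hx⟩
    have hle2 : gmult G ≤ x := hle
    omega
  refine ⟨hm, hmG, ?_, hlow, ?_, hG⟩
  · intro h2
    rcases hG.2 (2 * gmult G) h2 (gmult G) (gmult G) hm hm (by ring) with h | h <;>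
      exact hmG h
  · intro x hx
    rcases G.eq_empty_or_nonempty with rfl | hGne
    · exact absurd hx (Finset.notMem_empty x)
    · unfold gdepth gcond at hd
      rw [dif_pos hGne] at hd
      have hlt : G.max' hGne + 1 + gmult G - 1 < 4 * gmult G := by
        have := (Nat.div_lt_iff_lt_mul hm).1 (lt_of_le_of_lt hd (by norm_num : (3:ℕ) < 4))
        omega
      have hxle : x ≤ G.max' hGne := Finset.le_max' G x hx
      omega

lemma mem_Amap {m : ℕ} {G : Finset ℕ} (h : Good m G) {z : ℕ} :
    z ∈ Amap m G ↔ (0 < z ∧ z ≤ m) ∨ (∃ x ∈ G, m < x ∧ x < 2*m ∧ z = x+1) ∨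
      (∃ x ∈ G, 2*m < x ∧ z = x+2) := by
  simp only [Amap, Finset.mem_insert, Finset.mem_image]
  constructor
  · rintro (rfl | ⟨x, hx, rfl⟩)
    · exact Or.inl ⟨h.hm, le_rfl⟩
    · have hxpos := h.hgap.1 x hx
      have hxm : x ≠ m := fun e => h.hmG (e ▸ hx)
      have hx2m : x ≠ 2*m := fun e => h.h2m (e ▸ hx)
      unfold fshift
      split_ifs with h1 h2
      · exact Or.inl ⟨hxpos, by omega⟩
      · exact Or.inr (Or.inl ⟨x, hx, by omega, h2, rfl⟩)
      · exact Or.inr (Or.inr ⟨x, hx, by omega, rfl⟩)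
  · rintro (⟨hz0, hzm⟩ | ⟨x, hx, hx1, hx2, rfl⟩ | ⟨x, hx, hx1, rfl⟩)
    · rcases eq_or_lt_of_le hzm with rfl | hlt
      · exact Or.inl rfl
      · exact Or.inr ⟨z, h.hlow z hz0 hlt, by unfold fshift; rw [if_pos hlt]⟩
    · exact Or.inr ⟨x, hx, by unfold fshift; split_ifs <;> omega⟩
    · exact Or.inr ⟨x, hx, by unfold fshift; split_ifs <;> omega⟩

lemma small_mem_Amap {m : ℕ} {G : Finset ℕ} (h : Good m G) {w : ℕ}
    (hw1 : 0 < w) (hw2 : w ≤ m) : w ∈ Amap m G :=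
  (mem_Amap h).2 (Or.inl ⟨hw1, hw2⟩)

lemma isGapset_Amap {m : ℕ} {G : Finset ℕ} (h : Good m G) : IsGapset (Amap m G) := by
  constructor
  · intro z hz
    rw [mem_Amap h] at hz
    rcases hz with ⟨hz0, _⟩ | ⟨x, _, _, _, rfl⟩ | ⟨x, _, _, rfl⟩ <;> omega
  · intro z hz a b ha hb hab
    rw [mem_Amap h] at hz
    rcases hz with ⟨hz0, hzm⟩ | ⟨x, hx, hx1, hx2, rfl⟩ | ⟨x, hx, hx1, rfl⟩
    · exact Or.inl (small_mem_Amap h ha (by omega))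
    · by_cases hA : a ≤ m
      · exact Or.inl (small_mem_Amap h ha hA)
      · exact Or.inr (small_mem_Amap h hb (by omega))
    · by_cases hA : a ≤ m
      · exact Or.inl (small_mem_Amap h ha hA)
      by_cases hB : b ≤ m
      · exact Or.inr (small_mem_Amap h hb hB)
      have hx3 := h.hbound x hx
      rcases h.hgap.2 x hx (a-1) (b-1) (by omega) (by omega) (by omega) with hc | hc
      · left
        have h1 : a - 1 ≠ m := fun e => h.hmG (e ▸ hc)
        have h2 : a - 1 ≠ 2*m := fun e => h.h2m (e ▸ hc)
        have hb1 : b - 1 < 3*m - (a-1) := by omega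
        -- if a-1 > 2m then b-1 < m, contradiction with b > m
        have h3 : a - 1 < 2*m := by omega
        exact (mem_Amap h).2 (Or.inr (Or.inl ⟨a-1, hc, by omega, h3, by omega⟩))
      · right
        have h1 : b - 1 ≠ m := fun e => h.hmG (e ▸ hc)
        have h2 : b - 1 ≠ 2*m := fun e => h.h2m (e ▸ hc)
        have h3 : b - 1 < 2*m := by omega
        exact (mem_Amap h).2 (Or.inr (Or.inl ⟨b-1, hc, by omega, h3, by omega⟩))

lemma isGapset_Bmap {m : ℕ} {G : Finset ℕ} (h : Good m G) : IsGapset (Bmap m G) := by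
  have hA := isGapset_Amap h
  constructor
  · intro z hz
    rcases Finset.mem_insert.1 hz with rfl | hz
    · omega
    · exact hA.1 z hz
  · intro z hz a b ha hb hab
    rcases Finset.mem_insert.1 hz with rfl | hz
    · by_cases hA' : a ≤ m
      · exact Or.inl (Finset.mem_insert_of_mem (small_mem_Amap h ha hA'))
      · exact Or.inr (Finset.mem_insert_of_mem (small_mem_Amap h hb (by omega)))
    · rcases hA.2 z hz a b ha hb hab with hc | hc
      · exact Or.inl (Finset.mem_insert_of_mem hc)
      · exact Or.inr (Finset.mem_insert_of_mem hc)

lemma notMem_Amap_succ {m : ℕ} {G : Finset ℕ} (h : Good m G) : m + 1 ∉ Amap m G := by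
  rw [mem_Amap h]
  rintro (⟨_, h2⟩ | ⟨x, _, hx1, hx2, he⟩ | ⟨x, hx, hx1, he⟩)
  · omega
  · omega
  · have := h.hm; omega

lemma notMem_Amap_2m1 {m : ℕ} {G : Finset ℕ} (h : Good m G) : 2*m + 1 ∉ Amap m G := by
  rw [mem_Amap h]
  have := h.hm
  rintro (⟨_, h2⟩ | ⟨x, _, hx1, hx2, he⟩ | ⟨x, hx, hx1, he⟩) <;> omega

lemma m_notMem_image {m : ℕ} {G : Finset ℕ} (_h : Good m G) :
    m ∉ G.image (fshift m) := by
  rintro hmem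
  rcases Finset.mem_image.1 hmem with ⟨x, hx, he⟩
  unfold fshift at he
  split_ifs at he <;> omega

lemma card_Amap {m : ℕ} {G : Finset ℕ} (h : Good m G) :
    (Amap m G).card = G.card + 1 := by
  rw [Amap, Finset.card_insert_of_notMem (m_notMem_image h),
    Finset.card_image_of_injective _ (fshift_strictMono m).injective]

lemma card_Bmap {m : ℕ} {G : Finset ℕ} (h : Good m G) :
    (Bmap m G).card = G.card + 2 := by
  rw [Bmap, Finset.card_insert_of_notMem (notMem_Amap_2m1 h), card_Amap h]

lemma gmult_Amap {m : ℕ} {G : Finset ℕ} (h : Good m G) : gmult (Amap m G) = m + 1 := by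
  have hne : {k : ℕ | 0 < k ∧ k ∉ Amap m G}.Nonempty :=
    ⟨m+1, by omega, notMem_Amap_succ h⟩
  have hmem := Nat.sInf_mem hne
  refine le_antisymm (Nat.sInf_le ⟨by omega, notMem_Amap_succ h⟩) ?_
  by_contra hlt
  push_neg at hlt
  unfold gmult at hlt
  exact hmem.2 (small_mem_Amap h hmem.1 (by omega))

lemma gmult_Bmap {m : ℕ} {G : Finset ℕ} (h : Good m G) : gmult (Bmap m G) = m + 1 := by
  have hm := h.hm
  have hnm : m + 1 ∉ Bmap m G := by
    rw [Bmap, Finset.mem_insert]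
    rintro (he | hmem)
    · omega
    · exact notMem_Amap_succ h hmem
  have hne : {k : ℕ | 0 < k ∧ k ∉ Bmap m G}.Nonempty := ⟨m+1, by omega, hnm⟩
  have hmem := Nat.sInf_mem hne
  refine le_antisymm (Nat.sInf_le ⟨by omega, hnm⟩) ?_
  by_contra hlt
  push_neg at hlt
  unfold gmult at hlt
  exact hmem.2 (Finset.mem_insert_of_mem (small_mem_Amap h hmem.1 (by omega)))

lemma mem_Amap_le {m : ℕ} {G : Finset ℕ} (h : Good m G) :
    ∀ z ∈ Amap m G, z ≤ 3*m + 1 := by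
  intro z hz
  rw [mem_Amap h] at hz
  rcases hz with ⟨_, h2⟩ | ⟨x, hx, _, hx2, rfl⟩ | ⟨x, hx, _, rfl⟩
  · omega
  · omega
  · have := h.hbound x hx; omega

lemma gdepth_Amap {m : ℕ} {G : Finset ℕ} (h : Good m G) : gdepth (Amap m G) ≤ 3 := by
  have hne : (Amap m G).Nonempty := ⟨m, Finset.mem_insert_self m _⟩
  have hmax : (Amap m G).max' hne ≤ 3*m + 1 :=
    Finset.max'_le _ _ _ (mem_Amap_le h)
  unfold gdepth gcond
  rw [gmult_Amap h, dif_pos hne]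
  have : ((Amap m G).max' hne + 1 + (m + 1) - 1) / (m + 1) < 4 :=
    Nat.div_lt_of_lt_mul (by omega)
  omega

lemma gdepth_Bmap {m : ℕ} {G : Finset ℕ} (h : Good m G) : gdepth (Bmap m G) ≤ 3 := by
  have hm := h.hm
  have hne : (Bmap m G).Nonempty := ⟨2*m+1, Finset.mem_insert_self _ _⟩
  have hmax : (Bmap m G).max' hne ≤ 3*m + 1 := by
    apply Finset.max'_le
    intro z hz
    rcases Finset.mem_insert.1 hz with rfl | hz
    · omega
    · exact mem_Amap_le h z hz
  unfold gdepth gcond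
  rw [gmult_Bmap h, dif_pos hne]
  have : ((Bmap m G).max' hne + 1 + (m + 1) - 1) / (m + 1) < 4 :=
    Nat.div_lt_of_lt_mul (by omega)
  omega

lemma Amap_inj {m₁ m₂ : ℕ} {G₁ G₂ : Finset ℕ} (h₁ : Good m₁ G₁) (h₂ : Good m₂ G₂)
    (he : Amap m₁ G₁ = Amap m₂ G₂) : G₁ = G₂ := by
  have hm : m₁ = m₂ := by
    have := (gmult_Amap h₁).symm.trans (he ▸ gmult_Amap h₂)
    omega
  subst hm
  have h1 : (Amap m₁ G₁).erase m₁ = G₁.image (fshift m₁) :=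
    Finset.erase_insert (m_notMem_image h₁)
  have h2 : (Amap m₁ G₂).erase m₁ = G₂.image (fshift m₁) :=
    Finset.erase_insert (m_notMem_image h₂)
  have : G₁.image (fshift m₁) = G₂.image (fshift m₁) := by
    rw [← h1, ← h2, he]
  exact Finset.image_injective (fshift_strictMono m₁).injective this

lemma Bmap_inj {m₁ m₂ : ℕ} {G₁ G₂ : Finset ℕ} (h₁ : Good m₁ G₁) (h₂ : Good m₂ G₂)
    (he : Bmap m₁ G₁ = Bmap m₂ G₂) : G₁ = G₂ := by
  have hm : m₁ = m₂ := by
    have := (gmult_Bmap h₁).symm.trans (he ▸ gmult_Bmap h₂)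
    omega
  subst hm
  have h1 : (Bmap m₁ G₁).erase (2*m₁+1) = Amap m₁ G₁ :=
    Finset.erase_insert (notMem_Amap_2m1 h₁)
  have h2 : (Bmap m₁ G₂).erase (2*m₁+1) = Amap m₁ G₂ :=
    Finset.erase_insert (notMem_Amap_2m1 h₂)
  exact Amap_inj h₁ h₂ (by rw [← h1, ← h2, he])

lemma Amap_ne_Bmap {m₁ m₂ : ℕ} {G₁ G₂ : Finset ℕ} (h₁ : Good m₁ G₁) (h₂ : Good m₂ G₂) :
    Amap m₁ G₁ ≠ Bmap m₂ G₂ := by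
  intro he
  have hm : m₁ = m₂ := by
    have := (gmult_Amap h₁).symm.trans (he ▸ gmult_Bmap h₂)
    omega
  subst hm
  exact notMem_Amap_2m1 h₁ (he ▸ Finset.mem_insert_self (2*m₁+1) (Amap m₁ G₂))

lemma finite_gapsets (k : ℕ) :
    Finite {G : Finset ℕ // IsGapset G ∧ G.card = k ∧ gdepth G ≤ 3} := by
  have hsub : {G : Finset ℕ | IsGapset G ∧ G.card = k ∧ gdepth G ≤ 3} ⊆
      ↑((Finset.range (3*k + 4)).powerset) := by
    intro G hG
    obtain ⟨hgap, hcard, hd⟩ := hG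
    have h := good_of hgap hd
    simp only [Finset.coe_powerset, Set.mem_preimage, Set.mem_powerset_iff,
      Finset.coe_subset, Finset.mem_coe, Finset.mem_powerset]
    intro x hx
    rw [Finset.mem_range]
    have hxb := h.hbound x hx
    -- multiplicity is at most k+1 since {1,...,m-1} ⊆ G
    have hIco : Finset.Ico 1 (gmult G) ⊆ G := by
      intro y hy
      rw [Finset.mem_Ico] at hy
      exact h.hlow y hy.1 hy.2
    have hmle : gmult G - 1 ≤ k := by
      have := Finset.card_le_card hIco
      rw [Nat.card_Ico] at this
      omega
    omega
  exact (Set.Finite.subset (Finset.finite_toSet _) hsub).to_subtype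

theorem stmt12 (g : ℕ) (hg : 2 ≤ g) :
    n' (g - 1) + n' (g - 2) ≤ n' g := by
  have F1 := finite_gapsets (g - 1)
  have F2 := finite_gapsets (g - 2)
  have Fg := finite_gapsets g
  let T := {G : Finset ℕ // IsGapset G ∧ G.card = g ∧ gdepth G ≤ 3}
  let S₁ := {G : Finset ℕ // IsGapset G ∧ G.card = g - 1 ∧ gdepth G ≤ 3}
  let S₂ := {G : Finset ℕ // IsGapset G ∧ G.card = g - 2 ∧ gdepth G ≤ 3}
  have good₁ : ∀ u : S₁, Good (gmult u.1) u.1 := fun u => good_of u.2.1 u.2.2.2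
  have good₂ : ∀ u : S₂, Good (gmult u.1) u.1 := fun u => good_of u.2.1 u.2.2.2
  let Φ : S₁ ⊕ S₂ → T := fun u =>
    match u with
    | Sum.inl u => ⟨Amap (gmult u.1) u.1,
        isGapset_Amap (good₁ u),
        by rw [card_Amap (good₁ u), u.2.2.1]; omega,
        gdepth_Amap (good₁ u)⟩
    | Sum.inr u => ⟨Bmap (gmult u.1) u.1,
        isGapset_Bmap (good₂ u),
        by rw [card_Bmap (good₂ u), u.2.2.1]; omega,
        gdepth_Bmap (good₂ u)⟩
  have hΦ : Function.Injective Φ := by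
    rintro (u | u) (v | v) huv
    · have he : Amap (gmult u.1) u.1 = Amap (gmult v.1) v.1 :=
        congrArg Subtype.val huv
      exact congrArg Sum.inl (Subtype.ext (Amap_inj (good₁ u) (good₁ v) he))
    · exact absurd (congrArg Subtype.val huv) (Amap_ne_Bmap (good₁ u) (good₂ v))
    · exact absurd (congrArg Subtype.val huv).symm (Amap_ne_Bmap (good₁ v) (good₂ u))
    · have he : Bmap (gmult u.1) u.1 = Bmap (gmult v.1) v.1 :=
        congrArg Subtype.val huv
      exact congrArg Sum.inr (Subtype.ext (Bmap_inj (good₂ u) (good₂ v) he))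
  have hcard := Nat.card_le_card_of_injective Φ hΦ
  rwa [Nat.card_sum] at hcard
end

section
/- Let G be a gapset of multiplicity m+1 and depth exactly 3, written as G = [1,m] ⊔ ((m+1)+F_1) ⊔ (2(m+1)+F_2) with [1,m] ⊇ F_1 ⊇ F_2 ≠ ∅. Let a_i = max F_i and F'_i = F_i \ {a_i} for i = 0,1,2 (where F_0 = [1,m], a_0 = m). Then G' = [1,m−1] ∪ (m + F'_1) ∪ (2m + F'_2) is a gapset. -/
theorem stmt13 (m : ℕ) (hm : 1 ≤ m) (F1 F2 G : Finset ℕ)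
    (hF1 : F1 ⊆ Finset.Icc 1 m) (hF2 : F2 ⊆ F1) (hF2ne : F2.Nonempty)
    (hGdef : G = Finset.Icc 1 m ∪ F1.image (fun x => (m + 1) + x)
        ∪ F2.image (fun x => 2 * (m + 1) + x))
    (hG : IsGapset G) (hmul : gmult G = m + 1) (hd : gdepth G = 3)
    (a1 a2 : ℕ) (ha1 : a1 ∈ F1) (ha1max : ∀ x ∈ F1, x ≤ a1)
    (ha2 : a2 ∈ F2) (ha2max : ∀ x ∈ F2, x ≤ a2) :
    IsGapset (Finset.Icc 1 (m - 1) ∪ (F1.erase a1).image (fun x => m + x)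
        ∪ (F2.erase a2).image (fun x => 2 * m + x)) := by
  have ha1m : a1 ≤ m := (Finset.mem_Icc.mp (hF1 ha1)).2
  have ha2a1 : a2 ≤ a1 := ha1max a2 (hF2 ha2)
  have hGmem : ∀ s : ℕ, 1 ≤ s → s ≤ m → (m + 1 + s) ∈ G → s ∈ F1 := by
    intro s h1 h2 hs
    rw [hGdef] at hs
    simp only [Finset.mem_union, Finset.mem_image, Finset.mem_Icc] at hs
    rcases hs with (h | ⟨f, hf, heq⟩) | ⟨f, hf, heq⟩
    · omega
    · have : s = f := by omega
      rwa [this]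
    · omega
  constructor
  · intro g hg
    simp only [Finset.mem_union, Finset.mem_image, Finset.mem_Icc, Finset.mem_erase] at hg
    rcases hg with (h | ⟨f, hf, heq⟩) | ⟨f, hf, heq⟩ <;> omega
  · intro z hz x y hx hy hxy
    simp only [Finset.mem_union, Finset.mem_image, Finset.mem_Icc, Finset.mem_erase] at hz ⊢
    rcases hz with (hz | ⟨f, ⟨hfa, hfF⟩, heq⟩) | ⟨f, ⟨hfa, hfF⟩, heq⟩
    · left; left; left; omega
    · -- z = m + f, f ∈ F1, f ≠ a1, so f < a1 ≤ m
      have hfa1 : f ≤ a1 := ha1max f hfF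
      by_cases hxm : x ≤ m - 1
      · left; left; left; omega
      · right; left; left; omega
    · -- z = 2m + f, f ∈ F2, f ≠ a2
      have hfa2 : f ≤ a2 := ha2max f hfF
      have hfm : f ≤ m := (Finset.mem_Icc.mp (hF1 (hF2 hfF))).2
      have hf1 : 1 ≤ f := (Finset.mem_Icc.mp (hF1 (hF2 hfF))).1
      by_cases hxm : x ≤ m - 1
      · left; left; left; omega
      by_cases hym : y ≤ m - 1
      · right; left; left; omega
      by_cases hx0 : x = m
      · right; left; right
        exact ⟨f, ⟨by omega, hF2 hfF⟩, by omega⟩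
      by_cases hy0 : y = m
      · left; left; right
        exact ⟨f, ⟨by omega, hF2 hfF⟩, by omega⟩
      -- now x ≥ m+1 and y ≥ m+1
      have hzG : 2 * (m + 1) + f ∈ G := by
        rw [hGdef]
        exact Finset.mem_union_right _ (Finset.mem_image.mpr ⟨f, hfF, rfl⟩)
      have hsplit := hG.2 _ hzG (x + 1) (y + 1) (by omega) (by omega) (by omega)
      rcases hsplit with h | h
      · have hs : x - m ∈ F1 := by
          apply hGmem (x - m) (by omega) (by omega)
          have hxx : m + 1 + (x - m) = x + 1 := by omega
          rwa [hxx]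
        left; left; right
        exact ⟨x - m, ⟨by omega, hs⟩, by omega⟩
      · have hs : y - m ∈ F1 := by
          apply hGmem (y - m) (by omega) (by omega)
          have hyy : m + 1 + (y - m) = y + 1 := by omega
          rwa [hyy]
        right; left; right
        exact ⟨y - m, ⟨by omega, hs⟩, by omega⟩
end

section
/- For all g ≥ 3, n'_{g−1} + n'_{g−2} ≤ n'_g ≤ n'_{g−1} + n'_{g−2} + n'_{g−3}, where n'_g is the number of gapsets of genus g and depth at most 3. -/
open Finset

def Valid (m : ℕ) (A B : Finset ℕ) : Prop :=
  1 ≤ m ∧ A ⊆ Finset.Ico 1 m ∧ B ⊆ A ∧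
    ∀ b ∈ B, ∀ i j : ℕ, 0 < i → 0 < j → i + j = b → i ∈ A ∨ j ∈ A

def decF (m : ℕ) (A B : Finset ℕ) : Finset ℕ :=
  Finset.Ico 1 m ∪ A.image (· + m) ∪ B.image (· + 2*m)

lemma mem_decF {m : ℕ} {A B : Finset ℕ} {x : ℕ} :
    x ∈ decF m A B ↔ (1 ≤ x ∧ x < m) ∨ (∃ a ∈ A, a + m = x) ∨ (∃ b ∈ B, b + 2*m = x) := by
  simp [decF, Finset.mem_union, Finset.mem_image, Finset.mem_Ico, or_assoc]

lemma mem_decF_lt {m : ℕ} {A B : Finset ℕ} (h : Valid m A B) {x : ℕ} (hx : x ∈ decF m A B) :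
    0 < x ∧ x < 3*m := by
  rcases mem_decF.1 hx with ⟨h1, h2⟩ | ⟨a, ha, rfl⟩ | ⟨b, hb, rfl⟩
  · omega
  · have := Finset.mem_Ico.1 (h.2.1 ha); omega
  · have := Finset.mem_Ico.1 (h.2.1 (h.2.2.1 hb)); omega

lemma gmult_decF {m : ℕ} {A B : Finset ℕ} (h : Valid m A B) : gmult (decF m A B) = m := by
  have hm : 1 ≤ m := h.1
  have hmem : m ∈ {k : ℕ | 0 < k ∧ k ∉ decF m A B} := by
    refine ⟨hm, fun hc => ?_⟩
    rcases mem_decF.1 hc with ⟨h1, h2⟩ | ⟨a, ha, hax⟩ | ⟨b, hb, hbx⟩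
    · omega
    · have := Finset.mem_Ico.1 (h.2.1 ha); omega
    · have := Finset.mem_Ico.1 (h.2.1 (h.2.2.1 hb)); omega
  apply le_antisymm (Nat.sInf_le hmem)
  by_contra hlt
  push_neg at hlt
  have hs := Nat.sInf_mem ⟨m, hmem⟩
  exact hs.2 (mem_decF.2 (Or.inl ⟨hs.1, hlt⟩))

lemma gdepth_decF {m : ℕ} {A B : Finset ℕ} (h : Valid m A B) : gdepth (decF m A B) ≤ 3 := by
  have hm : 1 ≤ m := h.1
  have hc : gcond (decF m A B) ≤ 3*m := by
    unfold gcond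
    split
    · next hne =>
      have := (mem_decF_lt h (Finset.max'_mem _ hne)).2
      omega
    · omega
  unfold gdepth
  rw [gmult_decF h]
  have : (gcond (decF m A B) + m - 1) / m < 4 := by
    rw [Nat.div_lt_iff_lt_mul (by omega)]
    omega
  omega

lemma isGapset_decF {m : ℕ} {A B : Finset ℕ} (h : Valid m A B) : IsGapset (decF m A B) := by
  obtain ⟨hm, hA, hBA, hstar⟩ := h
  constructor
  · intro x hx; exact (mem_decF_lt ⟨hm, hA, hBA, hstar⟩ hx).1
  · intro z hz x y hx hy hxy
    by_contra hc
    push_neg at hc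
    obtain ⟨hxG, hyG⟩ := hc
    have hxm : m ≤ x := by
      by_contra hlt; exact hxG (mem_decF.2 (Or.inl ⟨hx, by omega⟩))
    have hym : m ≤ y := by
      by_contra hlt; exact hyG (mem_decF.2 (Or.inl ⟨hy, by omega⟩))
    -- z ≥ 2m, so z is in the B part
    rcases mem_decF.1 hz with ⟨h1, h2⟩ | ⟨a, ha, haz⟩ | ⟨b, hb, hbz⟩
    · omega
    · have := Finset.mem_Ico.1 (hA ha); omega
    · -- x = m + i, y = m + j, i + j = b
      have hbm := Finset.mem_Ico.1 (hA (hBA hb))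
      set i := x - m with hi
      set j := y - m with hj
      have hij : i + j = b := by omega
      by_cases hi0 : i = 0
      · -- then j = b ∈ B ⊆ A, so y ∈ G
        have : b ∈ A := hBA hb
        exact hyG (mem_decF.2 (Or.inr (Or.inl ⟨b, this, by omega⟩)))
      by_cases hj0 : j = 0
      · have : b ∈ A := hBA hb
        exact hxG (mem_decF.2 (Or.inr (Or.inl ⟨b, this, by omega⟩)))
      rcases hstar b hb i j (by omega) (by omega) hij with hiA | hjA
      · exact hxG (mem_decF.2 (Or.inr (Or.inl ⟨i, hiA, by omega⟩)))
      · exact hyG (mem_decF.2 (Or.inr (Or.inl ⟨j, hjA, by omega⟩)))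

lemma card_decF {m : ℕ} {A B : Finset ℕ} (h : Valid m A B) :
    (decF m A B).card = m - 1 + A.card + B.card := by
  have hm : 1 ≤ m := h.1
  have h1 : Disjoint (Finset.Ico 1 m) (A.image (· + m)) := by
    rw [Finset.disjoint_left]
    rintro x hx hx2
    obtain ⟨a, ha, rfl⟩ := Finset.mem_image.1 hx2
    have := Finset.mem_Ico.1 hx; omega
  have h2 : Disjoint (Finset.Ico 1 m ∪ A.image (· + m)) (B.image (· + 2*m)) := by
    rw [Finset.disjoint_left]
    rintro x hx hx2
    obtain ⟨b, hb, rfl⟩ := Finset.mem_image.1 hx2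
    have hb1 := Finset.mem_Ico.1 (h.2.1 (h.2.2.1 hb))
    rcases Finset.mem_union.1 hx with hx | hx
    · have := Finset.mem_Ico.1 hx; omega
    · obtain ⟨a, ha, hae⟩ := Finset.mem_image.1 hx
      have := Finset.mem_Ico.1 (h.2.1 ha); omega
  rw [decF, Finset.card_union_of_disjoint h2, Finset.card_union_of_disjoint h1,
    Finset.card_image_of_injective _ (add_left_injective m),
    Finset.card_image_of_injective _ (add_left_injective (2*m)), Nat.card_Ico]

lemma decF_injA {m : ℕ} {A B : Finset ℕ} (h : Valid m A B) {x : ℕ}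
    (hx : x ∈ decF m A B) (h1 : m < x) (h2 : x < 2*m) : x - m ∈ A := by
  rcases mem_decF.1 hx with ⟨ha, hb⟩ | ⟨a, ha, rfl⟩ | ⟨b, hb, rfl⟩
  · omega
  · simpa using ha
  · have := Finset.mem_Ico.1 (h.2.1 (h.2.2.1 hb)); omega

lemma decF_injB {m : ℕ} {A B : Finset ℕ} (h : Valid m A B) {x : ℕ}
    (hx : x ∈ decF m A B) (h1 : 2*m < x) : x - 2*m ∈ B := by
  rcases mem_decF.1 hx with ⟨ha, hb⟩ | ⟨a, ha, rfl⟩ | ⟨b, hb, rfl⟩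
  · omega
  · have := Finset.mem_Ico.1 (h.2.1 ha); omega
  · simpa using hb

lemma decF_inj {m m' : ℕ} {A B A' B' : Finset ℕ} (h : Valid m A B) (h' : Valid m' A' B')
    (he : decF m A B = decF m' A' B') : m = m' ∧ A = A' ∧ B = B' := by
  have hm : m = m' := by
    have := gmult_decF h; have := gmult_decF h'; rw [he] at *; omega
  subst hm
  have hAsub : ∀ {A B A' B' : Finset ℕ}, Valid m A B → Valid m A' B' →
      decF m A B = decF m A' B' → A ⊆ A' := by
    intro A B A' B' h h' he a ha
    have hai := Finset.mem_Ico.1 (h.2.1 ha)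
    have : a + m ∈ decF m A' B' := by
      rw [← he]; exact mem_decF.2 (Or.inr (Or.inl ⟨a, ha, rfl⟩))
    have := decF_injA h' this (by omega) (by omega)
    simpa using this
  have hBsub : ∀ {A B A' B' : Finset ℕ}, Valid m A B → Valid m A' B' →
      decF m A B = decF m A' B' → B ⊆ B' := by
    intro A B A' B' h h' he b hb
    have hbi := Finset.mem_Ico.1 (h.2.1 (h.2.2.1 hb))
    have : b + 2*m ∈ decF m A' B' := by
      rw [← he]; exact mem_decF.2 (Or.inr (Or.inr ⟨b, hb, rfl⟩))
    have := decF_injB h' this (by omega)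
    simpa using this
  exact ⟨rfl, Finset.Subset.antisymm (hAsub h h' he) (hAsub h' h he.symm),
    Finset.Subset.antisymm (hBsub h h' he) (hBsub h' h he.symm)⟩

-- structure theorem
lemma gapset_structure {G : Finset ℕ} (hG : IsGapset G) (hd : gdepth G ≤ 3) :
    ∃ m A B, Valid m A B ∧ G = decF m A B := by
  set m := gmult G with hm
  have hSne : 0 < gcond G + 1 ∧ (gcond G + 1) ∉ G := by
    refine ⟨Nat.succ_pos _, fun hc => ?_⟩
    have hne : G.Nonempty := ⟨_, hc⟩
    have h1 : gcond G = G.max' hne + 1 := by unfold gcond; simp [hne]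
    have := Finset.le_max' G _ hc
    omega
  have hmem := Nat.sInf_mem (⟨gcond G + 1, hSne⟩ : {k : ℕ | 0 < k ∧ k ∉ G}.Nonempty)
  have hm1 : 1 ≤ m := hmem.1
  have hmG : m ∉ G := hmem.2
  have hlow : ∀ k, 1 ≤ k → k < m → k ∈ G := by
    intro k h1 h2
    by_contra hc
    exact absurd (show m ≤ k from Nat.sInf_le (show k ∈ {n : ℕ | 0 < n ∧ n ∉ G} from ⟨by omega, hc⟩)) (by omega)
  have hhigh : ∀ x ∈ G, x < 3*m := by
    intro x hx
    have hne : G.Nonempty := ⟨x, hx⟩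
    have hcond : gcond G = G.max' hne + 1 := by unfold gcond; simp [hne]
    have hdep : (gcond G + m - 1) / m ≤ 3 := hd
    have : gcond G + m - 1 < 4 * m := by
      by_contra hcc
      push_neg at hcc
      have := Nat.le_div_iff_mul_le (show 0 < m by omega) |>.2 (by omega : 4 * m ≤ gcond G + m - 1)
      omega
    have := Finset.le_max' G x hx
    omega
  have h2m : 2*m ∉ G := by
    intro hc
    rcases hG.2 _ hc m m (by omega) (by omega) (by ring) with h | h <;> exact hmG h
  set A := (G.filter fun x => m < x ∧ x < 2*m).image (· - m) with hA
  set B := (G.filter fun x => 2*m < x).image (· - 2*m) with hB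
  have hAmem : ∀ a, a ∈ A ↔ (a + m ∈ G ∧ 1 ≤ a ∧ a < m) := by
    intro a
    rw [hA]
    simp only [Finset.mem_image, Finset.mem_filter]
    constructor
    · rintro ⟨x, ⟨hxG, hx1, hx2⟩, rfl⟩
      refine ⟨by rwa [Nat.sub_add_cancel (by omega)], by omega, by omega⟩
    · rintro ⟨h1, h2, h3⟩
      exact ⟨a + m, ⟨h1, by omega, by omega⟩, by omega⟩
  have hBmem : ∀ b, b ∈ B ↔ (b + 2*m ∈ G ∧ 1 ≤ b) := by
    intro b
    rw [hB]
    simp only [Finset.mem_image, Finset.mem_filter]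
    constructor
    · rintro ⟨x, ⟨hxG, hx1⟩, rfl⟩
      refine ⟨by rwa [Nat.sub_add_cancel (by omega)], by omega⟩
    · rintro ⟨h1, h2⟩
      exact ⟨b + 2*m, ⟨h1, by omega⟩, by omega⟩
  have hABsub : B ⊆ A := by
    intro b hb
    obtain ⟨h1, h2⟩ := (hBmem b).1 hb
    have h3 : b + 2*m < 3*m := hhigh _ h1
    rcases hG.2 _ h1 (b + m) m (by omega) (by omega) (by ring) with h | h
    · exact (hAmem b).2 ⟨h, by omega, by omega⟩
    · exact absurd h hmG
  refine ⟨m, A, B, ⟨hm1, ?_, hABsub, ?_⟩, ?_⟩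
  · intro a ha
    obtain ⟨_, h2, h3⟩ := (hAmem a).1 ha
    exact Finset.mem_Ico.2 ⟨h2, h3⟩
  · intro b hb i j hi hj hij
    obtain ⟨h1, h2⟩ := (hBmem b).1 hb
    have hbA := hABsub hb
    obtain ⟨_, _, hbm⟩ := (hAmem b).1 hbA
    rcases hG.2 _ h1 (i + m) (j + m) (by omega) (by omega) (by omega) with h | h
    · exact Or.inl ((hAmem i).2 ⟨h, by omega, by omega⟩)
    · exact Or.inr ((hAmem j).2 ⟨h, by omega, by omega⟩)
  · apply Finset.ext
    intro x
    rw [mem_decF]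
    constructor
    · intro hx
      have hx0 : 0 < x := hG.1 x hx
      have hx3 : x < 3*m := hhigh x hx
      rcases lt_trichotomy x m with h | h | h
      · exact Or.inl ⟨by omega, h⟩
      · exact absurd (h ▸ hx) hmG
      rcases lt_trichotomy x (2*m) with h2 | h2 | h2
      · exact Or.inr (Or.inl ⟨x - m, (hAmem _).2 ⟨by rwa [Nat.sub_add_cancel (by omega)], by omega, by omega⟩, by omega⟩)
      · exact absurd (h2 ▸ hx) h2m
      · exact Or.inr (Or.inr ⟨x - 2*m, (hBmem _).2 ⟨by rwa [Nat.sub_add_cancel (by omega)], by omega⟩, by omega⟩)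
    · rintro (⟨h1, h2⟩ | ⟨a, ha, rfl⟩ | ⟨b, hb, rfl⟩)
      · exact hlow x h1 h2
      · exact ((hAmem a).1 ha).1
      · exact ((hBmem b).1 hb).1

def Trip (g : ℕ) : Type :=
  {t : ℕ × Finset ℕ × Finset ℕ // Valid t.1 t.2.1 t.2.2 ∧ t.1 - 1 + t.2.1.card + t.2.2.card = g}

instance trip_finite (g : ℕ) : Finite (Trip g) := by
  have : ∀ t : Trip g, t.1 ∈ (Finset.range (g+2)) ×ˢ
      ((Finset.range (g+2)).powerset ×ˢ (Finset.range (g+2)).powerset) := by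
    rintro ⟨⟨m, A, B⟩, ⟨hm, hA, hB, _⟩, hgen⟩
    simp only [Finset.mem_product, Finset.mem_range, Finset.mem_powerset]
    have hsub : A ⊆ Finset.range (g+2) := by
      intro a ha
      have := Finset.mem_Ico.1 (hA ha)
      simp only [Finset.mem_range]
      omega
    exact ⟨by omega, hsub, fun b hb => hsub (hB hb)⟩
  apply Finite.of_injective (fun t : Trip g =>
    (⟨t.1, this t⟩ : ((Finset.range (g+2)) ×ˢ
      ((Finset.range (g+2)).powerset ×ˢ (Finset.range (g+2)).powerset) : Finset _)))
  intro t t' h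
  exact Subtype.ext (by simpa [Subtype.ext_iff] using h)

lemma n'_eq_trip (g : ℕ) : n' g = Nat.card (Trip g) := by
  apply Nat.card_congr
  apply Equiv.symm
  apply Equiv.ofBijective (f := fun t : Trip g =>
    (⟨decF t.1.1 t.1.2.1 t.1.2.2, isGapset_decF t.2.1,
      by rw [card_decF t.2.1]; exact t.2.2, gdepth_decF t.2.1⟩ :
      {G : Finset ℕ // IsGapset G ∧ G.card = g ∧ gdepth G ≤ 3}))
  constructor
  · rintro ⟨⟨m, A, B⟩, hv, hgen⟩ ⟨⟨m', A', B'⟩, hv', hgen'⟩ h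
    have he := congrArg Subtype.val h
    simp only at he
    obtain ⟨h1, h2, h3⟩ := decF_inj hv hv' he
    subst h1; subst h2; subst h3; rfl
  · rintro ⟨G, hG, hcard, hd⟩
    obtain ⟨m, A, B, hv, rfl⟩ := gapset_structure hG hd
    refine ⟨⟨(m, A, B), hv, ?_⟩, rfl⟩
    rw [← card_decF hv]; exact hcard

lemma mem_range_of_valid {m : ℕ} {A B : Finset ℕ} (hv : Valid m A B) {a : ℕ} (ha : a ∈ A) :
    1 ≤ a ∧ a < m := Finset.mem_Ico.1 (hv.2.1 ha)

lemma valid_up {m : ℕ} {A B : Finset ℕ} (hv : Valid m A B) : Valid (m+1) A B :=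
  ⟨by omega, fun a ha => Finset.mem_Ico.2 (by have := mem_range_of_valid hv ha; omega),
    hv.2.2.1, hv.2.2.2⟩

lemma m_not_mem {m : ℕ} {A B : Finset ℕ} (hv : Valid m A B) : m ∉ A := by
  intro h; have := mem_range_of_valid hv h; omega

lemma valid_up2 {m : ℕ} {A B : Finset ℕ} (hv : Valid m A B) : Valid (m+1) (insert m A) B := by
  refine ⟨by omega, ?_, hv.2.2.1.trans (Finset.subset_insert _ _), ?_⟩
  · intro a ha
    rcases Finset.mem_insert.1 ha with rfl | ha
    · exact Finset.mem_Ico.2 ⟨hv.1, by omega⟩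
    · exact Finset.mem_Ico.2 (by have := mem_range_of_valid hv ha; omega)
  · intro b hb i j hi hj hij
    rcases hv.2.2.2 b hb i j hi hj hij with h | h
    · exact Or.inl (Finset.mem_insert_of_mem h)
    · exact Or.inr (Finset.mem_insert_of_mem h)

lemma valid_down1 {m : ℕ} {A B : Finset ℕ} (hv : Valid m A B) (hm : 2 ≤ m)
    (hA : m - 1 ∉ A) : Valid (m-1) A B := by
  refine ⟨by omega, ?_, hv.2.2.1, hv.2.2.2⟩
  intro a ha
  have h1 := mem_range_of_valid hv ha
  have h2 : a ≠ m - 1 := fun hc => hA (hc ▸ ha)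
  exact Finset.mem_Ico.2 ⟨h1.1, by omega⟩

lemma valid_down2 {m : ℕ} {A B : Finset ℕ} (hv : Valid m A B) (hm : 2 ≤ m)
    (hB : m - 1 ∉ B) : Valid (m-1) (A.erase (m-1)) B := by
  refine ⟨by omega, ?_, ?_, ?_⟩
  · intro a ha
    obtain ⟨hne, ha⟩ := Finset.mem_erase.1 ha
    have h1 := mem_range_of_valid hv ha
    exact Finset.mem_Ico.2 ⟨h1.1, by omega⟩
  · intro b hb
    exact Finset.mem_erase.2 ⟨fun hc => hB (hc ▸ hb), hv.2.2.1 hb⟩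
  · intro b hb i j hi hj hij
    have hbm := mem_range_of_valid hv (hv.2.2.1 hb)
    have hbne : b ≠ m - 1 := fun hc => hB (hc ▸ hb)
    rcases hv.2.2.2 b hb i j hi hj hij with h | h
    · exact Or.inl (Finset.mem_erase.2 ⟨by omega, h⟩)
    · exact Or.inr (Finset.mem_erase.2 ⟨by omega, h⟩)

lemma valid_down3 {m : ℕ} {A B : Finset ℕ} (hv : Valid m A B) (hm : 2 ≤ m) :
    Valid (m-1) (A.erase (m-1)) (B.erase (m-1)) := by
  refine ⟨by omega, ?_, Finset.erase_subset_erase _ hv.2.2.1, ?_⟩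
  · intro a ha
    obtain ⟨hne, ha⟩ := Finset.mem_erase.1 ha
    have h1 := mem_range_of_valid hv ha
    exact Finset.mem_Ico.2 ⟨h1.1, by omega⟩
  · intro b hb i j hi hj hij
    obtain ⟨hbne, hb⟩ := Finset.mem_erase.1 hb
    have hbm := mem_range_of_valid hv (hv.2.2.1 hb)
    rcases hv.2.2.2 b hb i j hi hj hij with h | h
    · exact Or.inl (Finset.mem_erase.2 ⟨by omega, h⟩)
    · exact Or.inr (Finset.mem_erase.2 ⟨by omega, h⟩)

lemma two_le_m {g m : ℕ} {A B : Finset ℕ} (hv : Valid m A B)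
    (hgen : m - 1 + A.card + B.card = g) (hg : 1 ≤ g) : 2 ≤ m := by
  by_contra hc
  have hm1 : m = 1 := by have := hv.1; omega
  have hA : A = ∅ := by
    rw [Finset.eq_empty_iff_forall_notMem]
    intro a ha; have := mem_range_of_valid hv ha; omega
  have hB : B = ∅ := Finset.subset_empty.1 (hA ▸ hv.2.2.1)
  rw [hA, hB] at hgen
  simp at hgen
  omega


def phi (g : ℕ) (hg : 3 ≤ g) : Trip (g-1) ⊕ Trip (g-2) → Trip g := fun x =>
  match x with
  | .inl ⟨(m, A, B), hp⟩ => ⟨(m + 1, A, B), valid_up hp.1,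
      by have := hp.1.1; have := hp.2; simp only at *; omega⟩
  | .inr ⟨(m, A, B), hp⟩ => ⟨(m + 1, insert m A, B), valid_up2 hp.1,
      by
        have h1 := hp.1.1
        have h2 := hp.2
        have h3 : (insert m A).card = A.card + 1 :=
          Finset.card_insert_of_notMem (m_not_mem hp.1)
        simp only at *
        omega⟩

lemma phi_inj (g : ℕ) (hg : 3 ≤ g) : Function.Injective (phi g hg) := by
  rintro (⟨⟨m, A, B⟩, ht⟩ | ⟨⟨m, A, B⟩, ht⟩) (⟨⟨m', A', B'⟩, ht'⟩ | ⟨⟨m', A', B'⟩, ht'⟩) h <;>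
    simp only [phi] at h <;>
    have hv := Subtype.ext_iff.1 h <;>
    simp only [Prod.mk.injEq] at hv <;>
    obtain ⟨h1, h2, h3⟩ := hv <;>
    have hmm : m = m' := by omega
  · subst hmm; subst h2; subst h3; rfl
  · subst hmm
    exact absurd (h2 ▸ Finset.mem_insert_self m A') (m_not_mem (ht.1 : Valid (m,A,B).1 (m,A,B).2.1 (m,A,B).2.2))
  · subst hmm
    exact absurd (h2.symm ▸ Finset.mem_insert_self m A) (m_not_mem (ht'.1 : Valid (m,A',B').1 (m,A',B').2.1 (m,A',B').2.2))
  · subst hmm; subst h3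
    have hAA : A = A' := by
      have hnA : m ∉ A := m_not_mem (ht.1 : Valid (m,A,B).1 (m,A,B).2.1 (m,A,B).2.2)
      have hnA' : m ∉ A' := m_not_mem (ht'.1 : Valid (m,A',B).1 (m,A',B).2.1 (m,A',B).2.2)
      rw [← Finset.erase_insert hnA, h2, Finset.erase_insert hnA']
    subst hAA; rfl

noncomputable def psi (g : ℕ) (hg : 3 ≤ g) : Trip g → Trip (g-1) ⊕ Trip (g-2) ⊕ Trip (g-3) :=
  fun t =>
  have hm2 : 2 ≤ t.1.1 := two_le_m t.2.1 t.2.2 (by omega)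
  if hB : t.1.1 - 1 ∈ t.1.2.2 then
    .inr (.inr ⟨(t.1.1 - 1, t.1.2.1.erase (t.1.1 - 1), t.1.2.2.erase (t.1.1 - 1)),
      valid_down3 t.2.1 hm2,
      by
        have h2 := t.2.2
        have hcA : (t.1.2.1.erase (t.1.1 - 1)).card = t.1.2.1.card - 1 :=
          Finset.card_erase_of_mem (t.2.1.2.2.1 hB)
        have hcB : (t.1.2.2.erase (t.1.1 - 1)).card = t.1.2.2.card - 1 :=
          Finset.card_erase_of_mem hB
        have hA1 : 1 ≤ t.1.2.1.card := Finset.card_pos.2 ⟨_, t.2.1.2.2.1 hB⟩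
        have hB1 : 1 ≤ t.1.2.2.card := Finset.card_pos.2 ⟨_, hB⟩
        simp only at *
        omega⟩)
  else if hA : t.1.1 - 1 ∈ t.1.2.1 then
    .inr (.inl ⟨(t.1.1 - 1, t.1.2.1.erase (t.1.1 - 1), t.1.2.2),
      valid_down2 t.2.1 hm2 hB,
      by
        have h2 := t.2.2
        have hcA : (t.1.2.1.erase (t.1.1 - 1)).card = t.1.2.1.card - 1 :=
          Finset.card_erase_of_mem hA
        have hA1 : 1 ≤ t.1.2.1.card := Finset.card_pos.2 ⟨_, hA⟩
        simp only at *
        omega⟩)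
  else
    .inl ⟨(t.1.1 - 1, t.1.2.1, t.1.2.2), valid_down1 t.2.1 hm2 hA,
      by have h2 := t.2.2; simp only at *; omega⟩

lemma psi_inj (g : ℕ) (hg : 3 ≤ g) : Function.Injective (psi g hg) := by
  rintro ⟨⟨m, A, B⟩, ht⟩ ⟨⟨m', A', B'⟩, ht'⟩ h
  have hm2 : 2 ≤ m := two_le_m (ht.1 : Valid (m,A,B).1 (m,A,B).2.1 (m,A,B).2.2) ht.2 (by omega)
  have hm2' : 2 ≤ m' := two_le_m (ht'.1 : Valid (m',A',B').1 (m',A',B').2.1 (m',A',B').2.2) ht'.2 (by omega)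
  simp only [psi] at h
  split_ifs at h
  · -- both: m-1 ∈ B, m'-1 ∈ B'
    simp only [Sum.inr.injEq] at h
    have hv := Subtype.ext_iff.1 (Sum.inr_injective h)
    simp only [Prod.mk.injEq] at hv
    obtain ⟨h1, h2, h3⟩ := hv
    have hmm : m = m' := by omega
    subst hmm
    have hAA : A = A' := by
      rw [← Finset.insert_erase (show m - 1 ∈ A from ht.1.2.2.1 ‹m - 1 ∈ B›), h2,
        Finset.insert_erase (show m - 1 ∈ A' from ht'.1.2.2.1 ‹m - 1 ∈ B'›)]
    have hBB : B = B' := by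
      rw [← Finset.insert_erase ‹m - 1 ∈ B›, h3, Finset.insert_erase ‹m - 1 ∈ B'›]
    subst hAA; subst hBB; rfl
  · simp at h
  · simp at h
  · -- both: m-1 ∉ B, m-1 ∈ A, m'-1 ∉ B', m'-1 ∈ A'
    simp only [Sum.inr.injEq, Sum.inl.injEq] at h
    have hv := Subtype.ext_iff.1 (Sum.inl_injective h)
    simp only [Prod.mk.injEq] at hv
    obtain ⟨h1, h2, h3⟩ := hv
    have hmm : m = m' := by omega
    subst hmm
    have hAA : A = A' := by
      rw [← Finset.insert_erase ‹m - 1 ∈ A›, h2, Finset.insert_erase ‹m - 1 ∈ A'›]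
    subst hAA; subst h3; rfl
  · -- neither
    replace h := Sum.inl_injective h
    have hv := Subtype.ext_iff.1 h
    simp only [Prod.mk.injEq] at hv
    obtain ⟨h1, h2, h3⟩ := hv
    have hmm : m = m' := by omega
    subst hmm; subst h2; subst h3; rfl


theorem stmt14 (g : ℕ) (hg : 3 ≤ g) :
    n' (g - 1) + n' (g - 2) ≤ n' g ∧ n' g ≤ n' (g - 1) + n' (g - 2) + n' (g - 3) := by
  rw [n'_eq_trip, n'_eq_trip, n'_eq_trip, n'_eq_trip]
  constructor
  · calc Nat.card (Trip (g-1)) + Nat.card (Trip (g-2))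
        = Nat.card (Trip (g-1) ⊕ Trip (g-2)) := Nat.card_sum.symm
      _ ≤ Nat.card (Trip g) := Nat.card_le_card_of_injective _ (phi_inj g hg)
  · calc Nat.card (Trip g)
        ≤ Nat.card (Trip (g-1) ⊕ Trip (g-2) ⊕ Trip (g-3)) :=
          Nat.card_le_card_of_injective _ (psi_inj g hg)
      _ = Nat.card (Trip (g-1)) + Nat.card (Trip (g-2)) + Nat.card (Trip (g-3)) := by
          rw [Nat.card_sum, Nat.card_sum]; ring
end

section
/- For integers a ≥ 1 and b ≥ 0, the set G = ⋃_{i=0}^{a-1} (3i + {1,2}) ∪ ⋃_{j=0}^{b-1} (3(a+j) + {1}) is a gapset if and only if b ≤ a + 1. (This is the gapset corresponding to the filtration (12)^a(1)^b of multiplicity 3.) -/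
theorem stmt16 (a b : ℕ) (ha : 1 ≤ a) :
    IsGapset ((Finset.range a).biUnion (fun i => {3 * i + 1, 3 * i + 2}) ∪
      (Finset.range b).image (fun j => 3 * (a + j) + 1)) ↔ b ≤ a + 1 := by
  have mem_G : ∀ n : ℕ, (n ∈ (Finset.range a).biUnion (fun i => {3 * i + 1, 3 * i + 2}) ∪
      (Finset.range b).image (fun j => 3 * (a + j) + 1)) ↔
      ((n % 3 = 1 ∧ n < 3 * (a + b)) ∨ (n % 3 = 2 ∧ n < 3 * a)) := by
    intro n
    simp only [Finset.mem_union, Finset.mem_biUnion, Finset.mem_image, Finset.mem_range,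
      Finset.mem_insert, Finset.mem_singleton]
    constructor
    · rintro (⟨i, hi, rfl | rfl⟩ | ⟨j, hj, rfl⟩) <;> omega
    · rintro (⟨h1, h2⟩ | ⟨h1, h2⟩)
      · rcases Nat.lt_or_ge n (3 * a) with h | h
        · exact Or.inl ⟨n / 3, by omega, Or.inl (by omega)⟩
        · exact Or.inr ⟨n / 3 - a, by omega, by omega⟩
      · exact Or.inl ⟨n / 3, by omega, Or.inr (by omega)⟩
  constructor
  · intro h
    by_contra hb
    push_neg at hb
    have hz : (6 * a + 4) ∈ _ := (mem_G (6 * a + 4)).2 (Or.inl ⟨by omega, by omega⟩)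
    have := h.2 _ hz (3 * a + 2) (3 * a + 2) (by omega) (by omega) (by omega)
    rcases this with h' | h' <;> rw [mem_G] at h' <;> omega
  · intro hb
    constructor
    · intro g hg
      rw [mem_G] at hg; omega
    · intro z hz x y hx hy hxy
      rw [mem_G] at hz
      rw [mem_G, mem_G]
      omega
end

section
/- For integers a ≥ 1 and b ≥ 0, the set G = ⋃_{i=0}^{a-1} (3i + {1,2}) ∪ ⋃_{j=0}^{b-1} (3(a+j) + {2}) is a gapset if and only if b ≤ a. (This is the gapset corresponding to the filtration (12)^a(2)^b of multiplicity 3.) -/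
lemma memG (a b n : ℕ) :
    n ∈ (Finset.range a).biUnion (fun i => {3 * i + 1, 3 * i + 2}) ∪
      (Finset.range b).image (fun j => 3 * (a + j) + 2) ↔
    (n % 3 = 1 ∧ n < 3 * a) ∨ (n % 3 = 2 ∧ n < 3 * (a + b)) := by
  simp only [Finset.mem_union, Finset.mem_biUnion, Finset.mem_range, Finset.mem_insert,
    Finset.mem_singleton, Finset.mem_image]
  constructor
  · rintro (⟨i, hi, (rfl | rfl)⟩ | ⟨j, hj, rfl⟩) <;> omega
  · rintro (⟨h1, h2⟩ | ⟨h1, h2⟩)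
    · exact Or.inl ⟨n / 3, by omega, Or.inl (by omega)⟩
    · by_cases h : n < 3 * a
      · exact Or.inl ⟨n / 3, by omega, Or.inr (by omega)⟩
      · exact Or.inr ⟨n / 3 - a, by omega, by omega⟩

theorem stmt17 (a b : ℕ) (ha : 1 ≤ a) :
    IsGapset ((Finset.range a).biUnion (fun i => {3 * i + 1, 3 * i + 2}) ∪
      (Finset.range b).image (fun j => 3 * (a + j) + 2)) ↔ b ≤ a := by
  constructor
  · intro hG
    by_contra hb
    push_neg at hb
    have hz : (3 * (a + b) - 1) ∈ _ := (memG a b _).mpr (Or.inr ⟨by omega, by omega⟩)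
    rcases hG.2 _ hz (3 * a + 1) (3 * b - 2) (by omega) (by omega) (by omega) with h | h <;>
      rw [memG] at h <;> omega
  · intro hb
    constructor
    · intro g hg
      rw [memG] at hg
      omega
    · intro z hz x y hx hy hxy
      rw [memG] at hz
      rw [memG, memG]
      omega
end
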